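/- arXiv:1907.04562 — 9 statements merged into one kernel-verified Lean document; each statement's English description precedes it below -/
import Mathlib

section
/- For a left-invariant k-form α on a Lie group with left-invariant metric, α is a Killing form (i.e. ∇_Y α = (1/(k+1)) Y ⌟ dα for all Y) if and only if Y ⌟ ∇_Y α = 0 for every left-invariant vector field Y; at the Lie algebra level, this is equivalent to: ∇_y y ⌟ α + Σ_i ∇_y u_i ∧ (y ⌟ u_i ⌟ α) = 0 for all y ∈ n, where {u_i} is an orthonormal basis of n. -/
/-!
Write `alt D (v) = Σ_i (-1)^i D (v i) (v without v i)` (Mathlib's `alternatizeUncurryFin`).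
Then `∇_y α = -alt (α (∇_y ·, ⋯))`, and since the Levi-Civita connection is torsion free,
`dα = alt (y ↦ ∇_y α)`. The condition `y ⌟ ∇_y α = 0` says precisely that `(y, v) ↦ (∇_y α) v`
is alternating in all `k + 3` arguments, i.e. is the curry of a form `Φ`; then
`dα = alt (curry Φ) = (k + 3) Φ`, which is the Killing equation. Conversely, `dα` is alternating,
so the Killing equation forces `y ⌟ ∇_y α = 0`. Finally `(∇_y α) (y, v)` expands in the
orthonormal basis into the algebraic identity, because `∇_y` is skew-adjoint.
-/

open Function

namespace AlternatingMap

variable {R M N : Type*} [CommRing R] [AddCommGroup M] [Module R M] [AddCommGroup N] [Module R N]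
  {n : ℕ}

theorem exists_curryLeft_eq_of_map_cons_self {D : M →ₗ[R] M [⋀^Fin (n + 1)]→ₗ[R] N}
    (hD : ∀ y v, D y (Fin.cons y v) = 0) :
    ∃ Φ : M [⋀^Fin (n + 2)]→ₗ[R] N, Φ.curryLeft = D := by
  have hD_of_eq : ∀ y (v : Fin (n + 1) → M) j, v j = y → D y v = 0 := by
    rintro y v j rfl
    rw [← Fin.insertNth_self_removeNth j v, map_insertNth]
    simp [Matrix.vecCons, hD]
  refine ⟨⟨(toMultilinearMapLM ∘ₗ D).uncurryLeft, ?_⟩, ?_⟩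
  · intro v i j hv hij
    show D (v 0) (Fin.tail v) = 0
    induction i using Fin.cases with
    | zero =>
      induction j using Fin.cases with
      | zero => exact absurd rfl hij
      | succ j => exact hD_of_eq _ _ j hv.symm
    | succ i =>
      induction j using Fin.cases with
      | zero => exact hD_of_eq _ _ i hv
      | succ j => exact (D (v 0)).map_eq_zero_of_eq _ hv (fun h => hij (h ▸ rfl))
  · ext y v
    simp [Matrix.vecCons]

theorem forall_eq_smul_alternatizeUncurryFin_iff {K : Type*} [Field K] [CharZero K] [Module K M]
    [Module K N] (D : M →ₗ[K] M [⋀^Fin (n + 1)]→ₗ[K] N) :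
    (∀ y v, D y v = ((n : K) + 2)⁻¹ • alternatizeUncurryFin D (Fin.cons y v)) ↔
      ∀ y v, D y (Fin.cons y v) = 0 := by
  constructor
  · intro hK y v
    rw [hK, (alternatizeUncurryFin D).map_eq_zero_of_eq _ (by simp) Fin.zero_ne_one, smul_zero]
  · intro hD y v
    obtain ⟨Φ, rfl⟩ := exists_curryLeft_eq_of_map_cons_self hD
    have hn : ((n : K) + 2) ≠ 0 := by exact_mod_cast (n + 1).succ_ne_zero
    rw [alternatizeUncurryFin_curryLeft, smul_apply, ← Nat.cast_smul_eq_nsmul K, smul_smul]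
    push_cast
    rw [add_assoc, one_add_one_eq_two, inv_mul_cancel₀ hn, one_smul]
    rfl

end AlternatingMap

theorem Fin.sum_sum_ite_lt {X : Type*} [AddCommMonoid X] {n : ℕ}
    (F : Fin (n + 2) → Fin (n + 2) → X) :
    ∑ i : Fin (n + 2), ∑ t : Fin (n + 2), (if (i : ℕ) < t then F i t else 0) =
      ∑ i : Fin (n + 1), ∑ j ≥ i, F i.castSucc j.succ := by
  rw [Fin.sum_univ_castSucc]
  simp only [← Fin.lt_def, Fin.sum_univ_succ (n := n + 1), Fin.not_lt_zero,
    Fin.castSucc_lt_succ_iff]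
  simp [Finset.filter_le_eq_Ici, ← Finset.sum_filter, (Fin.le_last _).not_gt]

theorem Fin.removeNth_succ_cons {α : Type*} {n : ℕ} (t : Fin (n + 1)) (y : α)
    (v : Fin (n + 1) → α) :
    t.succ.removeNth (Fin.cons y v : Fin (n + 2) → α) = Fin.cons y (t.removeNth v) := by
  ext s
  cases s using Fin.cases <;> simp [Fin.removeNth]

section Connection

open AlternatingMap

variable {R M N : Type*} [CommRing R] [AddCommGroup M] [Module R M] [AddCommGroup N] [Module R N]
  {n : ℕ}

def covDeriv (nabla : M →ₗ[R] M →ₗ[R] M) (α : M [⋀^Fin (n + 1)]→ₗ[R] N) :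
    M →ₗ[R] M [⋀^Fin (n + 1)]→ₗ[R] N :=
  -(alternatizeUncurryFinLM ∘ₗ nabla.compr₂ α.curryLeft)

theorem covDeriv_apply (nabla : M →ₗ[R] M →ₗ[R] M) (α : M [⋀^Fin (n + 1)]→ₗ[R] N) (y : M)
    (v : Fin (n + 1) → M) :
    covDeriv nabla α y v = -∑ i, α (update v i (nabla y (v i))) := by
  simp [covDeriv, alternatizeUncurryFin_apply, ← Fin.insertNth_removeNth, map_insertNth]

theorem covDeriv_apply_eq_sum_removeNth (nabla : M →ₗ[R] M →ₗ[R] M)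
    (α : M [⋀^Fin (n + 1)]→ₗ[R] N) (y : M) (v : Fin (n + 1) → M) :
    covDeriv nabla α y v =
      -∑ i : Fin (n + 1), (-1 : ℤ) ^ (i : ℕ) • α (Fin.cons (nabla y (v i)) (i.removeNth v)) := by
  rw [covDeriv, LinearMap.neg_apply, LinearMap.comp_apply, alternatizeUncurryFinLM_apply,
    AlternatingMap.neg_apply, alternatizeUncurryFin_apply]
  rfl

/-- For `i < t`, the indices `i.succAbove (⟨t - 1, _⟩.succAbove s)` enumerate those other than
`i` and `t`. -/
def lieDifferential (l : M →ₗ[R] M →ₗ[R] M) (α : M [⋀^Fin (n + 2)]→ₗ[R] N)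
    (v : Fin (n + 3) → M) : N :=
  ∑ i : Fin (n + 3), ∑ t : Fin (n + 3),
    if (i : ℕ) < t then
      (-1 : R) ^ ((i : ℕ) + t) • α (Fin.cons (l (v i) (v t))
        fun s => v (i.succAbove ((⟨t - 1, by omega⟩ : Fin (n + 2)).succAbove s)))
    else 0

/-- In Mathlib's expansion of the doubly alternatized `α (∇_x y, ⋯)`, torsion-freeness combines
the two terms of each pair into one bracket term. -/
theorem lieDifferential_eq_alternatizeUncurryFin_covDeriv {l nabla : M →ₗ[R] M →ₗ[R] M}
    (htor : ∀ x y, l x y = nabla x y - nabla y x) (α : M [⋀^Fin (n + 2)]→ₗ[R] N)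
    (v : Fin (n + 3) → M) :
    lieDifferential l α v = alternatizeUncurryFin (covDeriv nabla α) v := by
  rw [covDeriv, ← alternatizeUncurryFinLM_apply, map_neg, alternatizeUncurryFinLM_apply,
    AlternatingMap.neg_apply, alternatizeUncurryFin_alternatizeUncurryFinLM_comp_apply, lieDifferential,
    Fin.sum_sum_ite_lt, ← Finset.sum_neg_distrib]
  refine Fintype.sum_congr _ _ fun i => ?_
  rw [← Finset.sum_neg_distrib]
  refine Finset.sum_congr rfl fun j _ => ?_
  simp only [Fin.val_castSucc, Fin.val_succ, Nat.add_sub_cancel, Fin.eta, htor]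
  change _ • α.curryLeft (_ - _) (j.removeNth (i.castSucc.removeNth v)) = _
  rw [map_sub, AlternatingMap.sub_apply, ← add_assoc, pow_succ, mul_neg_one, neg_smul,
    ← Int.cast_smul_eq_zsmul R]
  push_cast
  rfl

end Connection

open scoped RealInnerProductSpace

section InnerProductSpace

variable {E N : Type*} [NormedAddCommGroup E] [InnerProductSpace ℝ E] [AddCommGroup N]
  [Module ℝ N]

theorem AlternatingMap.map_cons_eq_sum_inner_smul {ι : Type*} [Fintype ι] {n : ℕ}
    (u : OrthonormalBasis ι ℝ E) (α : E [⋀^Fin (n + 1)]→ₗ[ℝ] N) (x : E) (r : Fin n → E) :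
    α (Fin.cons x r) = ∑ i, ⟪u i, x⟫ • α (Fin.cons (u i) r) := by
  conv_lhs => rw [← u.sum_repr' x, ← Fin.update_cons_zero 0, α.map_update_sum]
  refine Finset.sum_congr rfl fun i _ => ?_
  rw [α.map_update_smul, Fin.update_cons_zero]

variable {l nabla : E →ₗ[ℝ] E →ₗ[ℝ] E}

theorem lie_eq_sub_of_koszul (hanti : l.IsAlt)
    (hnab : ∀ x y w, 2 * ⟪nabla x y, w⟫ = ⟪l x y, w⟫ + ⟪l w x, y⟫ + ⟪l w y, x⟫) (x y : E) :
    l x y = nabla x y - nabla y x := by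
  refine ext_inner_right ℝ fun w => ?_
  have hxy := hnab x y w
  have hyx := hnab y x w
  rw [← hanti.neg x y, inner_neg_left] at hyx
  rw [inner_sub_left]
  linarith

theorem inner_apply_eq_neg_of_koszul (hanti : l.IsAlt)
    (hnab : ∀ x y w, 2 * ⟪nabla x y, w⟫ = ⟪l x y, w⟫ + ⟪l w x, y⟫ + ⟪l w y, x⟫) (x y w : E) :
    ⟪y, nabla x w⟫ = -⟪nabla x y, w⟫ := by
  have hyw := hnab x y w
  have hwy := hnab x w y
  rw [← hanti.neg w x, ← hanti.neg x y, ← hanti.neg w y, inner_neg_left, inner_neg_left,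
    inner_neg_left] at hwy
  rw [real_inner_comm (nabla x w) y]
  linarith

theorem covDeriv_apply_cons_self {p n : ℕ} (u : OrthonormalBasis (Fin p) ℝ E)
    (hskew : ∀ x y w, ⟪y, nabla x w⟫ = -⟪nabla x y, w⟫) (α : E [⋀^Fin (n + 2)]→ₗ[ℝ] ℝ) (y : E)
    (v : Fin (n + 1) → E) :
    covDeriv nabla α y (Fin.cons y v) = -(α (Fin.cons (nabla y y) v) +
      ∑ i, ∑ t : Fin (n + 1), (-1) ^ (t : ℕ) * ⟪nabla y (u i), v t⟫ *
        α (Fin.cons (u i) (Fin.cons y (t.removeNth v)))) := by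
  rw [covDeriv_apply_eq_sum_removeNth, Fin.sum_univ_succ, Finset.sum_comm]
  congr 2
  · simp
  refine Finset.sum_congr rfl fun t _ => ?_
  rw [Fin.cons_succ, Fin.removeNth_succ_cons, α.map_cons_eq_sum_inner_smul u, Finset.smul_sum]
  refine Finset.sum_congr rfl fun i _ => ?_
  rw [hskew, zsmul_eq_mul, smul_eq_mul, Fin.val_succ, pow_succ]
  push_cast
  ring

end InnerProductSpace

/-- On a Lie group with left-invariant metric, a left-invariant `k`-form `α`
(here of degree `k + 2`) is Killing, i.e. `∇_y α = (1/(k+1)) y ⌟ dα` for all `y`, if and only if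
`y ⌟ ∇_y α = 0` for all `y`; and this is in turn equivalent to the algebraic identity
`∇_y y ⌟ α + Σ_i ∇_y u_i ∧ (y ⌟ u_i ⌟ α) = 0` for all `y ∈ n`, where `{u_i}` is an
orthonormal basis of `n`.  All forms are handled through their values on tuples of vectors;
`Dα y` is the covariant derivative `∇_y α` and `dα` is the Lie algebra exterior differential. -/
theorem killing_stmt3 {n : Type*} [NormedAddCommGroup n] [InnerProductSpace ℝ n]
    -- the Lie bracket
    (l : n →ₗ[ℝ] n →ₗ[ℝ] n) (hanti : ∀ x : n, l x x = 0)
    -- the Levi-Civita connection, via the Koszul formula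
    (nabla : n →ₗ[ℝ] n →ₗ[ℝ] n)
    (hnab : ∀ x y w : n, 2 * ⟪nabla x y, w⟫ = ⟪l x y, w⟫ + ⟪l w x, y⟫ + ⟪l w y, x⟫)
    (k p : ℕ) (u : OrthonormalBasis (Fin p) ℝ n)
    -- a left-invariant form of degree k+2
    (α : AlternatingMap ℝ n ℝ (Fin (k + 2)))
    -- the covariant derivative ∇_y α, valuewise
    (Dα : n → (Fin (k + 2) → n) → ℝ)
    (hDα : ∀ (y : n) (v : Fin (k + 2) → n),
      Dα y v = -∑ i : Fin (k + 2), α (Function.update v i (nabla y (v i))))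
    -- the exterior differential dα (Lie algebra differential), valuewise
    (dα : (Fin (k + 3) → n) → ℝ)
    (hdα : ∀ v : Fin (k + 3) → n, dα v =
      ∑ i : Fin (k + 3), ∑ t : Fin (k + 3),
        if h : (i : ℕ) < (t : ℕ) then
          (-1 : ℝ) ^ ((i : ℕ) + (t : ℕ)) *
            α (Fin.cons (l (v i) (v t))
              (fun s : Fin (k + 1) =>
                v (i.succAbove ((⟨(t : ℕ) - 1, by have := t.isLt; omega⟩ :
                    Fin (k + 2)).succAbove s))))
        else 0) :
    -- Killing ↔ (y ⌟ ∇_y α = 0)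
    ((∀ (y : n) (v : Fin (k + 2) → n),
        Dα y v = (1 / (k + 3 : ℝ)) * dα (Fin.cons y v)) ↔
      (∀ (y : n) (v : Fin (k + 1) → n), Dα y (Fin.cons y v) = 0)) ∧
    -- (y ⌟ ∇_y α = 0) ↔ algebraic identity
    ((∀ (y : n) (v : Fin (k + 1) → n), Dα y (Fin.cons y v) = 0) ↔
      (∀ (y : n) (v : Fin (k + 1) → n),
        α (Fin.cons (nabla y y) v) +
          ∑ i : Fin p, ∑ t : Fin (k + 1),
            (-1 : ℝ) ^ (t : ℕ) * ⟪nabla y (u i), v t⟫ *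
              α (Fin.cons (u i) (Fin.cons y (fun s : Fin k => v (t.succAbove s)))) = 0)) := by
  have hD : Dα = fun y v => covDeriv nabla α y v := by
    funext y v
    rw [hDα, covDeriv_apply]
  have hd : dα = AlternatingMap.alternatizeUncurryFin (covDeriv nabla α) := by
    funext v
    rw [hdα, ← lieDifferential_eq_alternatizeUncurryFin_covDeriv (lie_eq_sub_of_koszul hanti hnab)]
    rfl
  subst hD hd
  have hc : (1 / (k + 3 : ℝ)) = ((k + 1 : ℕ) + 2 : ℝ)⁻¹ := by
    push_cast
    ring
  refine ⟨by simpa only [hc, smul_eq_mul] using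
      AlternatingMap.forall_eq_smul_alternatizeUncurryFin_iff (covDeriv nabla α),
    forall₂_congr fun y v => ?_⟩
  beta_reduce
  rw [covDeriv_apply_cons_self u (inner_apply_eq_neg_of_koszul hanti hnab), neg_eq_zero]
  rfl
end

section
/- On a 2-step nilpotent metric Lie algebra n = v ⊕ z, a 2-form α with components α₂ ∈ Λ²v*, α₁ ∈ v*⊗z*, α₀ ∈ Λ²z* (viewed as skew-symmetric endomorphisms) is a Killing 2-form if and only if α₁ = 0 and j(α₀z) = 3α₂ j(z) = −3 j(z) α₂ for all z ∈ z. -/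
/-!
Since `[n, n] ⊆ z` and `z` is central, every bracket in the Koszul expression of `y ⌟ ∇_y α`
only sees the `v`-components of its arguments, and its pairing with a vector only sees the
`z`-component of that vector. Writing `y = z + v` and `b = z' + v'`, the Killing condition thus
splits into its parts of type `(z, v, z')`, `(v, v, z')` and `(z, v, v')`.
The first reads `-2⟪[α₁ z', v], z⟫ + ⟪[α₁ z, v], z'⟫ = 0`; exchanging `z` and `z'` gives
`[α₁ z', v] = 0`, so `α₁ z' ∈ z ∩ z^⊥ = 0`, and `α₁ = 0` by skew-symmetry.
The second says `⟪j(z') α₂ v, v⟫ = 0`, i.e. `α₂` anticommutes with `j(z')`, and with this the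
third reads `j(α₀ z) = -3 j(z) α₂ = 3 α₂ j(z)`.
-/

open scoped RealInnerProductSpace

namespace TwoStepNilpotent

variable {n : Type*} [NormedAddCommGroup n] [InnerProductSpace ℝ n]
  {l : n →ₗ[ℝ] n →ₗ[ℝ] n} {Z : Submodule ℝ n} {j : n → n →ₗ[ℝ] n}

theorem eq_zero_of_forall_inner_orthogonal [Z.HasOrthogonalProjection] {T : n →ₗ[ℝ] n}
    (hT : ∀ x, T x ∈ Zᗮ) (hTZ : ∀ z ∈ Z, T z = 0)
    (h : ∀ v ∈ Zᗮ, ∀ v' ∈ Zᗮ, ⟪T v, v'⟫ = 0) : T = 0 := by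
  ext x
  obtain ⟨w, hw, v, hv, rfl⟩ := Z.exists_add_mem_mem_orthogonal x
  rw [map_add, hTZ w hw, zero_add, LinearMap.zero_apply]
  exact inner_self_eq_zero.mp (h v hv _ (hT v))

theorem inner_add_inner_swap_eq_zero {S : Submodule ℝ n} {T : n →ₗ[ℝ] n}
    (h : ∀ v ∈ S, ⟪T v, v⟫ = 0) {v v' : n} (hv : v ∈ S) (hv' : v' ∈ S) :
    ⟪T v, v'⟫ + ⟪T v', v⟫ = 0 := by
  have hsum := h (v + v') (add_mem hv hv')
  simp only [map_add, inner_add_left, inner_add_right, h v hv, h v' hv'] at hsum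
  linarith

theorem bracket_eq_zero_of_mem_right (hl : l.IsAlt) (hZ : ∀ x, x ∈ Z ↔ ∀ y, l x y = 0)
    {z : n} (hz : z ∈ Z) (x : n) : l x z = 0 := by
  rw [← hl.neg, (hZ z).1 hz x, neg_zero]

theorem bracket_add_add_of_mem (hl : l.IsAlt) (hZ : ∀ x, x ∈ Z ↔ ∀ y, l x y = 0)
    {z z' : n} (hz : z ∈ Z) (hz' : z' ∈ Z) (x y : n) : l (z + x) (z' + y) = l x y := by
  simp only [map_add, LinearMap.add_apply, (hZ z).1 hz, bracket_eq_zero_of_mem_right hl hZ hz',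
    zero_add]

theorem inner_bracket_add_of_mem_orthogonal (h2 : ∀ x y, l x y ∈ Z) {u : n} (hu : u ∈ Zᗮ)
    (x y w : n) : ⟪l x y, w + u⟫ = ⟪l x y, w⟫ := by
  rw [inner_add_right, Submodule.inner_right_of_mem_orthogonal (h2 x y) hu, add_zero]

theorem eq_zero_of_inner_bracket_eq_zero [Z.HasOrthogonalProjection] (hl : l.IsAlt)
    (hZ : ∀ x, x ∈ Z ↔ ∀ y, l x y = 0) (h2 : ∀ x y, l x y ∈ Z) {x : n} (hx : x ∈ Zᗮ)
    (h : ∀ z ∈ Z, ∀ v ∈ Zᗮ, ⟪l x v, z⟫ = 0) : x = 0 := by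
  have hcentral : x ∈ Z := (hZ x).2 fun y => by
    obtain ⟨w, hw, v, hv, rfl⟩ := Z.exists_add_mem_mem_orthogonal y
    rw [map_add, bracket_eq_zero_of_mem_right hl hZ hw, zero_add]
    exact inner_self_eq_zero.mp (h _ (h2 x v) v hv)
  exact inner_self_eq_zero.mp (Submodule.inner_right_of_mem_orthogonal hcentral hx)

theorem inner_bracket_eq_inner_j (hj : ∀ z x y, ⟪j z x, y⟫ = ⟪z, l x y⟫) (x y w : n) :
    ⟪l x y, w⟫ = ⟪j w x, y⟫ :=
  (real_inner_comm _ _).trans (hj w x y).symm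

theorem inner_j_swap (hl : l.IsAlt) (hj : ∀ z x y, ⟪j z x, y⟫ = ⟪z, l x y⟫) (w x y : n) :
    ⟪j w x, y⟫ = -⟪x, j w y⟫ := by
  rw [real_inner_comm _ x, hj, hj, ← hl.neg, inner_neg_right]

theorem j_apply_mem_orthogonal (hl : l.IsAlt) (hZ : ∀ x, x ∈ Z ↔ ∀ y, l x y = 0)
    (hj : ∀ z x y, ⟪j z x, y⟫ = ⟪z, l x y⟫) (w x : n) : j w x ∈ Zᗮ := by
  rw [Submodule.mem_orthogonal']
  intro u hu
  rw [← inner_bracket_eq_inner_j hj, bracket_eq_zero_of_mem_right hl hZ hu,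
    inner_zero_left]

theorem j_apply_eq_zero_of_mem (hZ : ∀ x, x ∈ Z ↔ ∀ y, l x y = 0)
    (hj : ∀ z x y, ⟪j z x, y⟫ = ⟪z, l x y⟫) (w : n) {x : n} (hx : x ∈ Z) : j w x = 0 :=
  ext_inner_right ℝ fun y => by rw [hj, (hZ x).1 hx, inner_zero_right, inner_zero_left]

theorem two_mul_killing_eq (hl : l.IsAlt) {nabla : n →ₗ[ℝ] n →ₗ[ℝ] n}
    (hnab : ∀ x y w, 2 * ⟪nabla x y, w⟫ = ⟪l x y, w⟫ + ⟪l w x, y⟫ + ⟪l w y, x⟫)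
    {A : n →ₗ[ℝ] n} (hA : ∀ a b, ⟪A a, b⟫ = -⟪a, A b⟫) (y b : n) :
    2 * (⟪A (nabla y y), b⟫ + ⟪A y, nabla y b⟫) =
      -2 * ⟪l (A b) y, y⟫ + ⟪l y b, A y⟫ + ⟪l (A y) y, b⟫ + ⟪l (A y) b, y⟫ := by
  have hyy := hnab y y (A b)
  have hyb := hnab y b (A y)
  rw [hl y, inner_zero_left] at hyy
  rw [hA (nabla y y), real_inner_comm (nabla y b)]
  linarith

theorem killing_expr_add_eq (hl : l.IsAlt) (hZ : ∀ x, x ∈ Z ↔ ∀ y, l x y = 0)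
    (h2 : ∀ x y, l x y ∈ Z) {A : n →ₗ[ℝ] n} {z v z' v' p q p' q' : n}
    (hz : z ∈ Z) (hv : v ∈ Zᗮ) (hz' : z' ∈ Z) (hv' : v' ∈ Zᗮ)
    (hAy : A (z + v) = p + q) (hp : p ∈ Z) (hq : q ∈ Zᗮ)
    (hAb : A (z' + v') = p' + q') (hp' : p' ∈ Z) :
    -2 * ⟪l (A (z' + v')) (z + v), z + v⟫ + ⟪l (z + v) (z' + v'), A (z + v)⟫
        + ⟪l (A (z + v)) (z + v), z' + v'⟫ + ⟪l (A (z + v)) (z' + v'), z + v⟫ =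
      -2 * ⟪l q' v, z⟫ + ⟪l v v', p⟫ + ⟪l q v, z'⟫ + ⟪l q v', z⟫ := by
  rw [hAy, hAb, bracket_add_add_of_mem hl hZ hp' hz, bracket_add_add_of_mem hl hZ hz hz',
    bracket_add_add_of_mem hl hZ hp hz, bracket_add_add_of_mem hl hZ hp hz']
  simp only [inner_bracket_add_of_mem_orthogonal h2 hv, inner_bracket_add_of_mem_orthogonal h2 hq,
    inner_bracket_add_of_mem_orthogonal h2 hv']

theorem apply_add_eq_blocks {A A2 A1 A0 : n →ₗ[ℝ] n} (hsum : A = A2 + A1 + A0)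
    (hA2Z : ∀ z ∈ Z, A2 z = 0) (hA0V : ∀ x ∈ Zᗮ, A0 x = 0) {z v : n} (hz : z ∈ Z)
    (hv : v ∈ Zᗮ) : A (z + v) = (A0 z + A1 v) + (A1 z + A2 v) := by
  simp only [hsum, LinearMap.add_apply, map_add, hA2Z z hz, hA0V v hv, add_zero, zero_add]
  abel

theorem killing_iff_components [Z.HasOrthogonalProjection] (hl : l.IsAlt)
    (hZ : ∀ x, x ∈ Z ↔ ∀ y, l x y = 0) (h2 : ∀ x y, l x y ∈ Z) {nabla : n →ₗ[ℝ] n →ₗ[ℝ] n}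
    (hnab : ∀ x y w, 2 * ⟪nabla x y, w⟫ = ⟪l x y, w⟫ + ⟪l w x, y⟫ + ⟪l w y, x⟫)
    {A A2 A1 A0 : n →ₗ[ℝ] n} (hA : ∀ a b, ⟪A a, b⟫ = -⟪a, A b⟫) (hsum : A = A2 + A1 + A0)
    (hA2V : ∀ x ∈ Zᗮ, A2 x ∈ Zᗮ) (hA2Z : ∀ z ∈ Z, A2 z = 0)
    (hA1V : ∀ x ∈ Zᗮ, A1 x ∈ Z) (hA1Z : ∀ z ∈ Z, A1 z ∈ Zᗮ)
    (hA0V : ∀ x ∈ Zᗮ, A0 x = 0) (hA0Z : ∀ z ∈ Z, A0 z ∈ Z) :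
    (∀ y b, ⟪A (nabla y y), b⟫ + ⟪A y, nabla y b⟫ = 0) ↔
      ∀ z ∈ Z, ∀ v ∈ Zᗮ, ∀ z' ∈ Z, ∀ v' ∈ Zᗮ,
        -2 * ⟪l (A1 z' + A2 v') v, z⟫ + ⟪l v v', A0 z + A1 v⟫ + ⟪l (A1 z + A2 v) v, z'⟫
          + ⟪l (A1 z + A2 v) v', z⟫ = 0 := by
  have hexpr : ∀ z ∈ Z, ∀ v ∈ Zᗮ, ∀ z' ∈ Z, ∀ v' ∈ Zᗮ,
      2 * (⟪A (nabla (z + v) (z + v)), z' + v'⟫ + ⟪A (z + v), nabla (z + v) (z' + v')⟫) =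
        -2 * ⟪l (A1 z' + A2 v') v, z⟫ + ⟪l v v', A0 z + A1 v⟫ + ⟪l (A1 z + A2 v) v, z'⟫
          + ⟪l (A1 z + A2 v) v', z⟫ := fun z hz v hv z' hz' v' hv' => by
    rw [two_mul_killing_eq hl hnab hA]
    exact killing_expr_add_eq hl hZ h2 hz hv hz' hv' (apply_add_eq_blocks hsum hA2Z hA0V hz hv)
      (add_mem (hA0Z z hz) (hA1V v hv)) (add_mem (hA1Z z hz) (hA2V v hv))
      (apply_add_eq_blocks hsum hA2Z hA0V hz' hv') (add_mem (hA0Z z' hz') (hA1V v' hv'))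
  constructor
  · intro h z hz v hv z' hz' v' hv'
    rw [← hexpr z hz v hv z' hz' v' hv', h, mul_zero]
  · intro h y b
    obtain ⟨z, hz, v, hv, rfl⟩ := Z.exists_add_mem_mem_orthogonal y
    obtain ⟨z', hz', v', hv', rfl⟩ := Z.exists_add_mem_mem_orthogonal b
    have h2K := hexpr z hz v hv z' hz' v' hv'
    rw [h z hz v hv z' hz' v' hv'] at h2K
    linarith

theorem offDiag_eq_zero_of_killing_components [Z.HasOrthogonalProjection] (hl : l.IsAlt)
    (hZ : ∀ x, x ∈ Z ↔ ∀ y, l x y = 0) (h2 : ∀ x y, l x y ∈ Z) {A2 A1 A0 : n →ₗ[ℝ] n}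
    (hA1skew : ∀ a b, ⟪A1 a, b⟫ = -⟪a, A1 b⟫) (hA1V : ∀ x ∈ Zᗮ, A1 x ∈ Z)
    (hA1Z : ∀ z ∈ Z, A1 z ∈ Zᗮ)
    (hK : ∀ z ∈ Z, ∀ v ∈ Zᗮ, ∀ z' ∈ Z, ∀ v' ∈ Zᗮ,
      -2 * ⟪l (A1 z' + A2 v') v, z⟫ + ⟪l v v', A0 z + A1 v⟫ + ⟪l (A1 z + A2 v) v, z'⟫
        + ⟪l (A1 z + A2 v) v', z⟫ = 0) :
    A1 = 0 := by
  have hmixed : ∀ z ∈ Z, ∀ z' ∈ Z, ∀ v ∈ Zᗮ, -2 * ⟪l (A1 z') v, z⟫ + ⟪l (A1 z) v, z'⟫ = 0 := by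
    intro z hz z' hz' v hv
    have hzv := hK z hz v hv z' hz' 0 Zᗮ.zero_mem
    have hv0 := hK 0 Z.zero_mem v hv z' hz' 0 Zᗮ.zero_mem
    simp only [map_zero, map_add, LinearMap.add_apply, inner_add_left, inner_zero_left,
      inner_zero_right, add_zero, zero_add, mul_zero] at hzv hv0
    linarith
  have hA1Z_zero : ∀ z' ∈ Z, A1 z' = 0 := fun z' hz' =>
    eq_zero_of_inner_bracket_eq_zero hl hZ h2 (hA1Z z' hz') fun z hz v hv => by
      linarith [hmixed z hz z' hz' v hv, hmixed z' hz' z hz v hv]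
  have hA1V_zero : ∀ v ∈ Zᗮ, A1 v = 0 := fun v hv => by
    have hself := hA1skew v (A1 v)
    rw [hA1Z_zero _ (hA1V v hv), inner_zero_right, neg_zero] at hself
    exact inner_self_eq_zero.mp hself
  ext x
  obtain ⟨z, hz, v, hv, rfl⟩ := Z.exists_add_mem_mem_orthogonal x
  rw [map_add, hA1Z_zero z hz, hA1V_zero v hv, add_zero, LinearMap.zero_apply]

theorem comp_j_eq_neg_iff [Z.HasOrthogonalProjection] (hl : l.IsAlt)
    (hZ : ∀ x, x ∈ Z ↔ ∀ y, l x y = 0) (hj : ∀ z x y, ⟪j z x, y⟫ = ⟪z, l x y⟫)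
    {A2 : n →ₗ[ℝ] n} (hA2skew : ∀ a b, ⟪A2 a, b⟫ = -⟪a, A2 b⟫) (hA2V : ∀ x ∈ Zᗮ, A2 x ∈ Zᗮ)
    (hA2Z : ∀ z ∈ Z, A2 z = 0) (w : n) :
    A2 ∘ₗ j w = -(j w ∘ₗ A2) ↔ ∀ v ∈ Zᗮ, ⟪j w (A2 v), v⟫ = 0 := by
  have hpair : ∀ x y, ⟪(A2 ∘ₗ j w + j w ∘ₗ A2) x, y⟫ = ⟪j w (A2 y), x⟫ + ⟪j w (A2 x), y⟫ :=
    fun x y => by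
      rw [LinearMap.add_apply, inner_add_left, LinearMap.comp_apply, LinearMap.comp_apply,
        hA2skew, inner_j_swap hl hj, neg_neg, real_inner_comm x]
  rw [← add_eq_zero_iff_eq_neg]
  constructor
  · intro h v _
    have hvv := hpair v v
    rw [h, LinearMap.zero_apply, inner_zero_left] at hvv
    linarith
  · intro h
    refine eq_zero_of_forall_inner_orthogonal (Z := Z) (fun x => ?_) (fun z hz => ?_)
      fun v hv v' hv' => ?_
    · exact add_mem (hA2V _ (j_apply_mem_orthogonal hl hZ hj w x))
        (j_apply_mem_orthogonal hl hZ hj w _)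
    · simp [j_apply_eq_zero_of_mem hZ hj w hz, hA2Z z hz]
    · rw [hpair, add_comm]
      exact inner_add_inner_swap_eq_zero (T := j w ∘ₗ A2) h hv hv'

theorem j_eq_smul_comp_iff [Z.HasOrthogonalProjection] (hl : l.IsAlt)
    (hZ : ∀ x, x ∈ Z ↔ ∀ y, l x y = 0) (hj : ∀ z x y, ⟪j z x, y⟫ = ⟪z, l x y⟫)
    {A2 : n →ₗ[ℝ] n} (hA2V : ∀ x ∈ Zᗮ, A2 x ∈ Zᗮ) {w : n}
    (hanticomm : A2 ∘ₗ j w = -(j w ∘ₗ A2)) (u : n) :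
    j u = (3 : ℝ) • (A2 ∘ₗ j w) ↔ ∀ v ∈ Zᗮ, ∀ v' ∈ Zᗮ, ⟪j u v, v'⟫ + 3 * ⟪j w (A2 v), v'⟫ = 0 := by
  have hpair : ∀ x y, ⟪(j u - (3 : ℝ) • (A2 ∘ₗ j w)) x, y⟫ = ⟪j u x, y⟫ + 3 * ⟪j w (A2 x), y⟫ :=
    fun x y => by
      rw [hanticomm, LinearMap.sub_apply, smul_neg, LinearMap.neg_apply, sub_neg_eq_add,
        inner_add_left, LinearMap.smul_apply, real_inner_smul_left, LinearMap.comp_apply]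
  rw [← sub_eq_zero]
  constructor
  · intro h v _ v' _
    rw [← hpair, h, LinearMap.zero_apply, inner_zero_left]
  · intro h
    refine eq_zero_of_forall_inner_orthogonal (Z := Z) (fun x => ?_) (fun z hz => ?_)
      fun v hv v' hv' => ?_
    · exact sub_mem (j_apply_mem_orthogonal hl hZ hj u x)
        (Zᗮ.smul_mem _ (hA2V _ (j_apply_mem_orthogonal hl hZ hj w x)))
    · simp [j_apply_eq_zero_of_mem hZ hj _ hz]
    · rw [hpair]
      exact h v hv v' hv'

theorem killing_relations_iff [Z.HasOrthogonalProjection] (hl : l.IsAlt)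
    (hZ : ∀ x, x ∈ Z ↔ ∀ y, l x y = 0) (hj : ∀ z x y, ⟪j z x, y⟫ = ⟪z, l x y⟫)
    {A2 A0 : n →ₗ[ℝ] n} (hA2skew : ∀ a b, ⟪A2 a, b⟫ = -⟪a, A2 b⟫) (hA2V : ∀ x ∈ Zᗮ, A2 x ∈ Zᗮ)
    (hA2Z : ∀ z ∈ Z, A2 z = 0) (z : n) :
    (j (A0 z) = (3 : ℝ) • (A2 ∘ₗ j z) ∧ (3 : ℝ) • (A2 ∘ₗ j z) = -((3 : ℝ) • (j z ∘ₗ A2))) ↔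
      (∀ v ∈ Zᗮ, ⟪l (A2 v) v, z⟫ = 0) ∧
        ∀ v ∈ Zᗮ, ∀ v' ∈ Zᗮ, -2 * ⟪l (A2 v') v, z⟫ + ⟪l v v', A0 z⟫ + ⟪l (A2 v) v', z⟫ = 0 := by
  have hanticomm_iff := comp_j_eq_neg_iff hl hZ hj hA2skew hA2V hA2Z z
  simp only [inner_bracket_eq_inner_j hj]
  rw [← smul_neg, smul_right_inj three_ne_zero]
  constructor
  · rintro ⟨hA0, hanticomm⟩
    have ha := hanticomm_iff.1 hanticomm
    have hd := (j_eq_smul_comp_iff hl hZ hj hA2V hanticomm _).1 hA0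
    refine ⟨ha, fun v hv v' hv' => ?_⟩
    have hsymm : ⟪j z (A2 v), v'⟫ + ⟪j z (A2 v'), v⟫ = 0 :=
      inner_add_inner_swap_eq_zero (T := j z ∘ₗ A2) ha hv hv'
    linarith [hd v hv v' hv']
  · rintro ⟨ha, hd⟩
    have hanticomm := hanticomm_iff.2 ha
    refine ⟨(j_eq_smul_comp_iff hl hZ hj hA2V hanticomm _).2 fun v hv v' hv' => ?_, hanticomm⟩
    have hsymm : ⟪j z (A2 v), v'⟫ + ⟪j z (A2 v'), v⟫ = 0 :=
      inner_add_inner_swap_eq_zero (T := j z ∘ₗ A2) ha hv hv'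
    linarith [hd v hv v' hv']

end TwoStepNilpotent

open TwoStepNilpotent

theorem killing_stmt4_general {n : Type*} [NormedAddCommGroup n] [InnerProductSpace ℝ n]
    [FiniteDimensional ℝ n]
    (l : n →ₗ[ℝ] n →ₗ[ℝ] n) (hanti : ∀ x : n, l x x = 0)
    (Z : Submodule ℝ n) (hZ : ∀ x : n, x ∈ Z ↔ ∀ y : n, l x y = 0)
    (h2 : ∀ x y : n, l x y ∈ Z)
    (j : n → n →ₗ[ℝ] n) (hj : ∀ z x y : n, ⟪j z x, y⟫ = ⟪z, l x y⟫)
    -- the Levi-Civita connection, via the Koszul formula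
    (nabla : n →ₗ[ℝ] n →ₗ[ℝ] n)
    (hnab : ∀ x y w : n, 2 * ⟪nabla x y, w⟫ = ⟪l x y, w⟫ + ⟪l w x, y⟫ + ⟪l w y, x⟫)
    -- the 2-form α, viewed as a skew-symmetric endomorphism A, with components A2, A1, A0
    (A A2 A1 A0 : n →ₗ[ℝ] n)
    (hA2skew : ∀ a b : n, ⟪A2 a, b⟫ = -⟪a, A2 b⟫)
    (hA2V : ∀ x ∈ Zᗮ, A2 x ∈ Zᗮ) (hA2Z : ∀ z ∈ Z, A2 z = 0)
    (hA1skew : ∀ a b : n, ⟪A1 a, b⟫ = -⟪a, A1 b⟫)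
    (hA1V : ∀ x ∈ Zᗮ, A1 x ∈ Z) (hA1Z : ∀ z ∈ Z, A1 z ∈ Zᗮ)
    (hA0skew : ∀ a b : n, ⟪A0 a, b⟫ = -⟪a, A0 b⟫)
    (hA0V : ∀ x ∈ Zᗮ, A0 x = 0) (hA0Z : ∀ z ∈ Z, A0 z ∈ Z)
    (hsum : A = A2 + A1 + A0) :
    -- Killing condition: y ⌟ ∇_y α = 0 for the 2-form α(a,b) = ⟪A a, b⟫
    (∀ y b : n, ⟪A (nabla y y), b⟫ + ⟪A y, nabla y b⟫ = 0) ↔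
      (A1 = 0 ∧ ∀ z ∈ Z,
        j (A0 z) = (3 : ℝ) • (A2 ∘ₗ j z) ∧
        (3 : ℝ) • (A2 ∘ₗ j z) = -((3 : ℝ) • ((j z) ∘ₗ A2))) := by
  have hA : ∀ a b : n, ⟪A a, b⟫ = -⟪a, A b⟫ := fun a b => by
    simp only [hsum, LinearMap.add_apply, inner_add_left, inner_add_right, hA2skew, hA1skew,
      hA0skew]
    ring
  rw [killing_iff_components hanti hZ h2 hnab hA hsum hA2V hA2Z hA1V hA1Z hA0V hA0Z]
  have hrel := killing_relations_iff hanti hZ hj hA2skew hA2V hA2Z (A0 := A0)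
  constructor
  · intro hK
    obtain rfl := offDiag_eq_zero_of_killing_components hanti hZ h2 hA1skew hA1V hA1Z hK
    refine ⟨rfl, fun z hz => (hrel z).2 ⟨fun v hv => ?_, fun v hv v' hv' => ?_⟩⟩
    · simpa using hK 0 Z.zero_mem v hv z hz 0 Zᗮ.zero_mem
    · simpa using hK z hz v hv 0 Z.zero_mem v' hv'
  · rintro ⟨rfl, hK⟩ z hz v hv z' hz' v' hv'
    have hvvz' := ((hrel z').1 (hK z' hz')).1 v hv
    have hzvv' := ((hrel z).1 (hK z hz)).2 v hv v' hv'
    simp only [LinearMap.zero_apply, zero_add, add_zero]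
    linarith

/-- On a 2-step nilpotent metric Lie algebra `n = v ⊕ z`, a 2-form
`α = α₂ + α₁ + α₀` (components viewed as skew-symmetric endomorphisms) is a Killing 2-form
(i.e. `y ⌟ ∇_y α = 0` for all `y`) if and only if `α₁ = 0` and
`j(α₀ z) = 3 α₂ j(z) = −3 j(z) α₂` for all `z ∈ z`. -/
theorem killing_stmt4 {n : Type*} [NormedAddCommGroup n] [InnerProductSpace ℝ n]
    [FiniteDimensional ℝ n]
    (l : n →ₗ[ℝ] n →ₗ[ℝ] n) (hanti : ∀ x : n, l x x = 0)
    (Z : Submodule ℝ n) (hZ : ∀ x : n, x ∈ Z ↔ ∀ y : n, l x y = 0)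
    (h2 : ∀ x y : n, l x y ∈ Z) (hna : ∃ x : n, ∃ y : n, l x y ≠ 0)
    (j : n → n →ₗ[ℝ] n) (hj : ∀ z x y : n, ⟪j z x, y⟫ = ⟪z, l x y⟫)
    -- the Levi-Civita connection, via the Koszul formula
    (nabla : n →ₗ[ℝ] n →ₗ[ℝ] n)
    (hnab : ∀ x y w : n, 2 * ⟪nabla x y, w⟫ = ⟪l x y, w⟫ + ⟪l w x, y⟫ + ⟪l w y, x⟫)
    -- the 2-form α, viewed as a skew-symmetric endomorphism A, with components A2, A1, A0
    (A A2 A1 A0 : n →ₗ[ℝ] n)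
    (hA2skew : ∀ a b : n, ⟪A2 a, b⟫ = -⟪a, A2 b⟫)
    (hA2V : ∀ x ∈ Zᗮ, A2 x ∈ Zᗮ) (hA2Z : ∀ z ∈ Z, A2 z = 0)
    (hA1skew : ∀ a b : n, ⟪A1 a, b⟫ = -⟪a, A1 b⟫)
    (hA1V : ∀ x ∈ Zᗮ, A1 x ∈ Z) (hA1Z : ∀ z ∈ Z, A1 z ∈ Zᗮ)
    (hA0skew : ∀ a b : n, ⟪A0 a, b⟫ = -⟪a, A0 b⟫)
    (hA0V : ∀ x ∈ Zᗮ, A0 x = 0) (hA0Z : ∀ z ∈ Z, A0 z ∈ Z)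
    (hsum : A = A2 + A1 + A0) :
    -- Killing condition: y ⌟ ∇_y α = 0 for the 2-form α(a,b) = ⟪A a, b⟫
    (∀ y b : n, ⟪A (nabla y y), b⟫ + ⟪A y, nabla y b⟫ = 0) ↔
      (A1 = 0 ∧ ∀ z ∈ Z,
        j (A0 z) = (3 : ℝ) • (A2 ∘ₗ j z) ∧
        (3 : ℝ) • (A2 ∘ₗ j z) = -((3 : ℝ) • ((j z) ∘ₗ A2))) :=
  killing_stmt4_general l hanti Z hZ h2 j hj nabla hnab A A2 A1 A0 hA2skew hA2V hA2Z hA1skew hA1V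
    hA1Z hA0skew hA0V hA0Z hsum
end

section
/- Let n be an irreducible 2-step nilpotent metric Lie algebra (i.e. not decomposable into an orthogonal direct sum of nonzero ideals) with j injective. If S is a symmetric endomorphism of n satisfying S[x,y] = [Sx,y] for all x,y ∈ n, then S is a real multiple of the identity. -/
/-!
The eigenspace `E` of `S` for any eigenvalue `c` is an ideal, since `S[x,y] = [Sx,y]`.
Its orthogonal complement is an ideal too: by antisymmetry `S` also commutes with right
multiplications, so the adjoint maps `j v` of `v ∈ E` preserve `E`, and
`⟪u, [x,y]⟫ = -⟪j u y, x⟫` then vanishes for `u ∈ E`, `x ∈ Eᗮ`. Irreducibility forces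
`E = n`, i.e. `S = c • id`.
-/

open scoped RealInnerProductSpace

open Module.End

section Bracket

variable {R M : Type*} [CommRing R] [AddCommGroup M] [Module R M]

def IsBracketIdeal (l : M →ₗ[R] M →ₗ[R] M) (N : Submodule R M) : Prop :=
  ∀ x ∈ N, ∀ y, l x y ∈ N

theorem LinearMap.IsAlt.map_apply_eq_apply_map_right {l : M →ₗ[R] M →ₗ[R] M} (hl : l.IsAlt)
    {S : M →ₗ[R] M} (hS : ∀ x y, S (l x y) = l (S x) y) (x y : M) :
    S (l x y) = l x (S y) := by
  rw [← hl.neg y x, map_neg, hS, hl.neg]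

theorem isBracketIdeal_eigenspace {l : M →ₗ[R] M →ₗ[R] M} {S : M →ₗ[R] M}
    (hS : ∀ x y, S (l x y) = l (S x) y) (c : R) : IsBracketIdeal l (eigenspace S c) := by
  intro x hx y
  rw [mem_eigenspace_iff] at hx ⊢
  rw [hS, hx, map_smul, LinearMap.smul_apply]

end Bracket

section Metric

variable {n : Type*} [NormedAddCommGroup n] [InnerProductSpace ℝ n]
  {l : n →ₗ[ℝ] n →ₗ[ℝ] n} {j : n → n →ₗ[ℝ] n}

theorem isBracketIdeal_orthogonal (hl : l.IsAlt) (hj : ∀ z x y, ⟪j z x, y⟫ = ⟪z, l x y⟫)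
    {V : Submodule ℝ n} (hV : ∀ v ∈ V, ∀ x, j v x ∈ V) : IsBracketIdeal l Vᗮ := by
  intro x hx y
  rw [Submodule.mem_orthogonal]
  intro u hu
  rw [← hl.neg, inner_neg_right, ← hj, Submodule.inner_right_of_mem_orthogonal (hV u hu y) hx,
    neg_zero]

theorem apply_mem_eigenspace_of_mem_eigenspace (hl : l.IsAlt)
    (hj : ∀ z x y, ⟪j z x, y⟫ = ⟪z, l x y⟫) {S : n →ₗ[ℝ] n} (hSsym : S.IsSymmetric)
    (hS : ∀ x y, S (l x y) = l (S x) y) {c : ℝ} {v : n} (hv : v ∈ eigenspace S c) (x : n) :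
    j v x ∈ eigenspace S c := by
  rw [mem_eigenspace_iff] at hv ⊢
  refine ext_inner_right ℝ fun w => ?_
  calc ⟪S (j v x), w⟫ = ⟪v, S (l x w)⟫ := by
        rw [hSsym, hj, hl.map_apply_eq_apply_map_right hS]
    _ = ⟪c • j v x, w⟫ := by
        rw [← hSsym, hv, inner_smul_left, inner_smul_left, hj]

end Metric

theorem killing_stmt6_general {n : Type*} [NormedAddCommGroup n] [InnerProductSpace ℝ n]
    [FiniteDimensional ℝ n]
    (l : n →ₗ[ℝ] n →ₗ[ℝ] n) (hanti : ∀ x : n, l x x = 0)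
    (j : n → n →ₗ[ℝ] n) (hj : ∀ z x y : n, ⟪j z x, y⟫ = ⟪z, l x y⟫)
    -- irreducibility: no orthogonal direct sum decomposition into nonzero ideals
    (hirr : ∀ N' N'' : Submodule ℝ n,
      (∀ x ∈ N', ∀ y : n, l x y ∈ N') → (∀ x ∈ N'', ∀ y : n, l x y ∈ N'') →
      (∀ x ∈ N', ∀ y ∈ N'', ⟪x, y⟫ = 0) → N' ⊔ N'' = ⊤ → N' = ⊥ ∨ N'' = ⊥)
    (S : n →ₗ[ℝ] n) (hSsym : ∀ a b : n, ⟪S a, b⟫ = ⟪a, S b⟫)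
    (hSbr : ∀ x y : n, S (l x y) = l (S x) y) :
    ∃ c : ℝ, ∀ x : n, S x = c • x := by
  rcases subsingleton_or_nontrivial n with _ | _
  · exact ⟨0, fun x => Subsingleton.elim _ _⟩
  obtain ⟨c, hc⟩ : ∃ c : ℝ, HasEigenvalue S c :=
    ⟨_, LinearMap.IsSymmetric.hasEigenvalue_iSup_of_finiteDimensional hSsym⟩
  have hperp : IsBracketIdeal l (eigenspace S c)ᗮ :=
    isBracketIdeal_orthogonal hanti hj fun _ hv =>
      apply_mem_eigenspace_of_mem_eigenspace hanti hj hSsym hSbr hv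
  rcases hirr _ _ (isBracketIdeal_eigenspace hSbr c) hperp
      (fun _ hx _ hy => Submodule.inner_right_of_mem_orthogonal hx hy)
      (Submodule.sup_orthogonal_of_hasOrthogonalProjection) with h | h
  · exact absurd h hc
  · refine ⟨c, fun x => mem_eigenspace_iff.mp ?_⟩
    rw [Submodule.orthogonal_eq_bot_iff.mp h]
    exact Submodule.mem_top

/-- (Lemma on irreducible algebras.) Let `n` be an irreducible 2-step
nilpotent metric Lie algebra with injective `j`.  If `S` is a symmetric endomorphism of `n`
satisfying `S[x,y] = [Sx,y]` for all `x, y ∈ n`, then `S` is a real multiple of the identity. -/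
theorem killing_stmt6 {n : Type*} [NormedAddCommGroup n] [InnerProductSpace ℝ n]
    [FiniteDimensional ℝ n]
    (l : n →ₗ[ℝ] n →ₗ[ℝ] n) (hanti : ∀ x : n, l x x = 0)
    (Z : Submodule ℝ n) (hZ : ∀ x : n, x ∈ Z ↔ ∀ y : n, l x y = 0)
    (h2 : ∀ x y : n, l x y ∈ Z) (hna : ∃ x : n, ∃ y : n, l x y ≠ 0)
    (j : n → n →ₗ[ℝ] n) (hj : ∀ z x y : n, ⟪j z x, y⟫ = ⟪z, l x y⟫)
    -- j is injective
    (hjinj : ∀ z ∈ Z, j z = 0 → z = 0)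
    -- irreducibility: no orthogonal direct sum decomposition into nonzero ideals
    (hirr : ∀ N' N'' : Submodule ℝ n,
      (∀ x ∈ N', ∀ y : n, l x y ∈ N') → (∀ x ∈ N'', ∀ y : n, l x y ∈ N'') →
      (∀ x ∈ N', ∀ y ∈ N'', ⟪x, y⟫ = 0) → N' ⊔ N'' = ⊤ → N' = ⊥ ∨ N'' = ⊥)
    (S : n →ₗ[ℝ] n) (hSsym : ∀ a b : n, ⟪S a, b⟫ = ⟪a, S b⟫)
    (hSbr : ∀ x y : n, S (l x y) = l (S x) y) :
    ∃ c : ℝ, ∀ x : n, S x = c • x :=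
  killing_stmt6_general l hanti j hj hirr S hSsym hSbr
end

section
/- On an irreducible 2-step nilpotent metric Lie algebra, there is a one-to-one correspondence between non-zero Killing 2-forms up to multiplication by a positive real number and orthogonal bi-invariant complex structures: given a Killing 2-form α = α₂ + α₀, the endomorphism J with J|_v = α₂/√(−λ) and J|_z = α₀/(3√(−λ)) is an orthogonal bi-invariant complex structure, where λ < 0 is the eigenvalue with α₂² = λ Id_v and (1/9)α₀² = λ Id_z; conversely, if J is an orthogonal bi-invariant complex structure, then α := J|_v + 3J|_z (as a 2-form) is Killing. -/
open scoped RealInnerProductSpace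

/-!
Put `K = α₂ + α₀/3`. The Killing condition says exactly that `K` is skew and commutes with
brackets, `K[x,y] = [Kx,y]`; conversely, such a `K` (for instance an orthogonal bi-invariant
complex structure) satisfies `j(Kz) = K ∘ j(z) = -j(z) ∘ K`, which is the Killing condition for
`K|_v + 3K|_z`. The symmetric map `K²` also commutes with brackets, so by irreducibility it is a
multiple `λ • id`, with `λ < 0` because `⟪K²x, x⟫ = -‖Kx‖²`; then `J = K/√(-λ)`.
-/

section Module

variable {R M : Type*} [CommSemiring R] [AddCommMonoid M] [Module R M]
  {l : M →ₗ[R] M →ₗ[R] M} {S : M →ₗ[R] M}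

theorem bracket_mem_ker_of_map_bracket (hS : ∀ x y, S (l x y) = l (S x) y) :
    ∀ x ∈ LinearMap.ker S, ∀ y, l x y ∈ LinearMap.ker S := by
  intro x hx y
  rw [LinearMap.mem_ker] at hx ⊢
  rw [hS, hx, map_zero, LinearMap.zero_apply]

theorem bracket_mem_range_of_map_bracket (hS : ∀ x y, S (l x y) = l (S x) y) :
    ∀ x ∈ LinearMap.range S, ∀ y, l x y ∈ LinearMap.range S := by
  rintro _ ⟨x, rfl⟩ y
  exact ⟨l x y, hS x y⟩

end Module

theorem inv_sqrt_smul_comp_self {M : Type*} [AddCommGroup M] [Module ℝ M] {K : M →ₗ[ℝ] M}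
    {μ : ℝ} (hKK : K ∘ₗ K = μ • LinearMap.id) (hμ : μ < 0) :
    ((√(-μ))⁻¹ • K) ∘ₗ ((√(-μ))⁻¹ • K) = -LinearMap.id := by
  have hc : (√(-μ))⁻¹ * (√(-μ))⁻¹ * μ = -1 := by
    have hsq : √(-μ) ^ 2 = -μ := Real.sq_sqrt (by linarith)
    have hpos : 0 < √(-μ) := Real.sqrt_pos.mpr (by linarith)
    field_simp
    linarith
  rw [LinearMap.smul_comp, LinearMap.comp_smul, hKK, smul_smul, smul_smul, hc, neg_one_smul]

section InnerProduct

variable {E : Type*} [NormedAddCommGroup E] [InnerProductSpace ℝ E]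

theorem map_mem_of_mem_of_mem_orthogonal {K S : Submodule ℝ E} [K.HasOrthogonalProjection]
    {A : E →ₗ[ℝ] E} (hK : ∀ x ∈ K, A x ∈ S) (hKo : ∀ x ∈ Kᗮ, A x ∈ S) (x : E) : A x ∈ S := by
  obtain ⟨y, hy, z, hz, rfl⟩ := K.exists_add_mem_mem_orthogonal x
  rw [map_add]
  exact add_mem (hK y hy) (hKo z hz)

theorem eq_of_forall_inner_eq_of_mem {K : Submodule ℝ E} {a b : E} (ha : a ∈ K) (hb : b ∈ K)
    (h : ∀ z ∈ K, ⟪z, a⟫ = ⟪z, b⟫) : a = b := by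
  have hab : ⟪a - b, a - b⟫ = 0 := by rw [inner_sub_right, h _ (sub_mem ha hb), sub_self]
  rwa [inner_self_eq_zero, sub_eq_zero] at hab

theorem isSymmetric_comp_self_of_skew {K : E →ₗ[ℝ] E} (hK : ∀ a b, ⟪K a, b⟫ = -⟪a, K b⟫) :
    (K ∘ₗ K).IsSymmetric := by
  intro a b
  simp only [LinearMap.comp_apply, hK, neg_neg]

theorem skew_add_smul {A B : E →ₗ[ℝ] E} (hA : ∀ a b, ⟪A a, b⟫ = -⟪a, A b⟫)
    (hB : ∀ a b, ⟪B a, b⟫ = -⟪a, B b⟫) (c : ℝ) (a b : E) :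
    ⟪(A + c • B) a, b⟫ = -⟪a, (A + c • B) b⟫ := by
  simp only [LinearMap.add_apply, LinearMap.smul_apply, inner_add_left, inner_add_right,
    real_inner_smul_left, real_inner_smul_right, hA, hB]
  ring

theorem skew_iff_orthogonal_of_comp_self_eq_neg_id {J : E →ₗ[ℝ] E}
    (hJ : J ∘ₗ J = -LinearMap.id) :
    (∀ a b, ⟪J a, b⟫ = -⟪a, J b⟫) ↔ ∀ a b, ⟪J a, J b⟫ = ⟪a, b⟫ := by
  have hJJ (x : E) : J (J x) = -x := by simpa using LinearMap.congr_fun hJ x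
  refine ⟨fun h a b => ?_, fun h a b => ?_⟩
  · rw [h, hJJ, inner_neg_right, neg_neg]
  · rw [← h, hJJ, inner_neg_left]

def IsOrthComplexStructure (l : E →ₗ[ℝ] E →ₗ[ℝ] E) (J : E →ₗ[ℝ] E) : Prop :=
  J ∘ₗ J = -LinearMap.id ∧ (∀ x y, J (l x y) = l (J x) y) ∧ ∀ a b, ⟪J a, J b⟫ = ⟪a, b⟫

theorem isOrthComplexStructure_inv_sqrt_smul {l : E →ₗ[ℝ] E →ₗ[ℝ] E} {K : E →ₗ[ℝ] E} {μ : ℝ}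
    (hK : ∀ a b, ⟪K a, b⟫ = -⟪a, K b⟫) (hKl : ∀ x y, K (l x y) = l (K x) y)
    (hKK : K ∘ₗ K = μ • LinearMap.id) (hμ : μ < 0) :
    IsOrthComplexStructure l ((√(-μ))⁻¹ • K) := by
  have hJJ := inv_sqrt_smul_comp_self hKK hμ
  refine ⟨hJJ, fun x y => by simp [hKl], (skew_iff_orthogonal_of_comp_self_eq_neg_id hJJ).1 ?_⟩
  intro a b
  simp only [LinearMap.smul_apply, real_inner_smul_left, real_inner_smul_right, hK, mul_neg]

def IsOrthIrreducible (l : E →ₗ[ℝ] E →ₗ[ℝ] E) : Prop :=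
  ∀ N' N'' : Submodule ℝ E,
    (∀ x ∈ N', ∀ y : E, l x y ∈ N') → (∀ x ∈ N'', ∀ y : E, l x y ∈ N'') →
    (∀ x ∈ N', ∀ y ∈ N'', ⟪x, y⟫ = 0) → N' ⊔ N'' = ⊤ → N' = ⊥ ∨ N'' = ⊥

section FiniteDimensional

variable [FiniteDimensional ℝ E] {l : E →ₗ[ℝ] E →ₗ[ℝ] E}

/-- Schur's lemma: `ker (S - μ)` and its orthogonal complement `range (S - μ)` are ideals, so
for an eigenvalue `μ` the first one is everything. -/
theorem IsOrthIrreducible.exists_eq_smul_id_of_isSymmetric (hirr : IsOrthIrreducible l)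
    {S : E →ₗ[ℝ] E} (hS : S.IsSymmetric) (hSl : ∀ x y, S (l x y) = l (S x) y) :
    ∃ μ : ℝ, S = μ • LinearMap.id := by
  cases subsingleton_or_nontrivial E
  · exact ⟨0, Subsingleton.elim _ _⟩
  obtain ⟨v, hv⟩ := hS.hasEigenvalue_iInf_of_finiteDimensional.exists_hasEigenvector
  set μ := ⨅ x : { x : E // x ≠ 0 }, RCLike.re ⟪S x, x⟫ / ‖(x : E)‖ ^ 2
  set T := S - μ • LinearMap.id
  have hTl (x y : E) : T (l x y) = l (T x) y := by simp [T, hSl]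
  have hT : T.IsSymmetric := by
    intro a b
    simp [T, hS a b, inner_sub_left, inner_sub_right, real_inner_smul_left,
      real_inner_smul_right]
  refine ⟨μ, sub_eq_zero.mp (LinearMap.range_eq_bot.mp ?_)⟩
  refine (hirr _ _ (bracket_mem_range_of_map_bracket hTl) ?_
    (fun x hx y hy => Submodule.inner_right_of_mem_orthogonal hx hy)
    Submodule.sup_orthogonal_of_hasOrthogonalProjection).resolve_right ?_
  · rw [hT.orthogonal_range]
    exact bracket_mem_ker_of_map_bracket hTl
  · rw [hT.orthogonal_range, Submodule.eq_bot_iff]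
    intro h
    refine hv.2 (h v ?_)
    simp [T, hv.apply_eq_smul]

theorem IsOrthIrreducible.exists_neg_comp_self_eq_smul_id (hirr : IsOrthIrreducible l)
    {K : E →ₗ[ℝ] E} (hK : ∀ a b, ⟪K a, b⟫ = -⟪a, K b⟫) (hKl : ∀ x y, K (l x y) = l (K x) y)
    (hK0 : K ≠ 0) : ∃ μ : ℝ, μ < 0 ∧ K ∘ₗ K = μ • LinearMap.id := by
  obtain ⟨μ, hμ⟩ := hirr.exists_eq_smul_id_of_isSymmetric (isSymmetric_comp_self_of_skew hK)
    (by simp [hKl])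
  refine ⟨μ, ?_, hμ⟩
  obtain ⟨x, hx⟩ : ∃ x, K x ≠ 0 := by
    by_contra! h
    exact hK0 (LinearMap.ext h)
  have key : μ * ‖x‖ ^ 2 = -‖K x‖ ^ 2 := by
    have hKKx : K (K x) = μ • x := by simpa using LinearMap.congr_fun hμ x
    rw [← real_inner_self_eq_norm_sq, ← real_inner_self_eq_norm_sq, ← real_inner_smul_left,
      ← hKKx, hK]
  exact neg_of_mul_neg_left (by rw [key]; have := norm_pos_iff.mpr hx; nlinarith)
    (sq_nonneg _)

end FiniteDimensional

section TwoStep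

variable {l : E →ₗ[ℝ] E →ₗ[ℝ] E} {j : E → E →ₗ[ℝ] E} {Z : Submodule ℝ E}

theorem j_smul (hj : ∀ z x y, ⟪j z x, y⟫ = ⟪z, l x y⟫) (c : ℝ) (z : E) : j (c • z) = c • j z := by
  ext x
  refine ext_inner_right ℝ fun y => ?_
  simp only [LinearMap.smul_apply, hj, real_inner_smul_left]

theorem j_apply_eq_zero_of_mem (hj : ∀ z x y, ⟪j z x, y⟫ = ⟪z, l x y⟫)
    (hZ : ∀ x, x ∈ Z ↔ ∀ y, l x y = 0) (z : E) {w : E} (hw : w ∈ Z) : j z w = 0 :=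
  ext_inner_right ℝ fun y => by rw [hj, (hZ w).1 hw y, inner_zero_right, inner_zero_left]

theorem j_apply_mem_orthogonal (hl : l.IsAlt) (hj : ∀ z x y, ⟪j z x, y⟫ = ⟪z, l x y⟫)
    (hZ : ∀ x, x ∈ Z ↔ ∀ y, l x y = 0) (z x : E) : j z x ∈ Zᗮ := by
  intro u hu
  rw [real_inner_comm, hj, hl.eq_iff.1 ((hZ u).1 hu x), inner_zero_right]

theorem map_mem_of_map_bracket (hZ : ∀ x, x ∈ Z ↔ ∀ y, l x y = 0) {K : E →ₗ[ℝ] E}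
    (hKl : ∀ x y, K (l x y) = l (K x) y) {z : E} (hz : z ∈ Z) : K z ∈ Z :=
  (hZ _).2 fun y => by rw [← hKl, (hZ z).1 hz y, map_zero]

theorem j_map_eq_neg_comp_of_map_bracket (hj : ∀ z x y, ⟪j z x, y⟫ = ⟪z, l x y⟫)
    {K : E →ₗ[ℝ] E} (hK : ∀ a b, ⟪K a, b⟫ = -⟪a, K b⟫) (hKl : ∀ x y, K (l x y) = l (K x) y)
    (z : E) : j (K z) = -(j z ∘ₗ K) := by
  ext x
  refine ext_inner_right ℝ fun y => ?_
  calc ⟪j (K z) x, y⟫ = -⟪z, K (l x y)⟫ := by rw [hj, hK]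
    _ = ⟪(-(j z ∘ₗ K)) x, y⟫ := by
      rw [hKl, LinearMap.neg_apply, inner_neg_left, LinearMap.comp_apply, hj]

theorem comp_j_eq_j_map_of_map_bracket (hl : l.IsAlt) (hj : ∀ z x y, ⟪j z x, y⟫ = ⟪z, l x y⟫)
    {K : E →ₗ[ℝ] E} (hK : ∀ a b, ⟪K a, b⟫ = -⟪a, K b⟫) (hKl : ∀ x y, K (l x y) = l (K x) y)
    (z : E) : K ∘ₗ j z = j (K z) := by
  ext x
  refine ext_inner_right ℝ fun y => ?_
  have hlK : l x (K y) = K (l x y) := by rw [← hl.neg (K y), ← hKl, ← map_neg, hl.neg]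
  rw [LinearMap.comp_apply, hK, hj, hlK, hj, hK]

theorem map_bracket_of_j_map_eq_neg_comp (h2 : ∀ x y, l x y ∈ Z)
    (hj : ∀ z x y, ⟪j z x, y⟫ = ⟪z, l x y⟫) {K : E →ₗ[ℝ] E} (hK : ∀ a b, ⟪K a, b⟫ = -⟪a, K b⟫)
    (hKZ : ∀ z ∈ Z, K z ∈ Z) (hKj : ∀ z ∈ Z, j (K z) = -(j z ∘ₗ K)) (x y : E) :
    K (l x y) = l (K x) y := by
  refine eq_of_forall_inner_eq_of_mem (hKZ _ (h2 x y)) (h2 _ _) fun z hz => ?_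
  rw [← hj, real_inner_comm, hK, real_inner_comm, ← hj, hKj z hz, LinearMap.neg_apply,
    inner_neg_left, neg_neg, LinearMap.comp_apply]

theorem eq_zero_of_add_smul_eq_zero [Z.HasOrthogonalProjection] {A2 A0 : E →ₗ[ℝ] E}
    (hA2Z : ∀ z ∈ Z, A2 z = 0) (hA0v : ∀ x ∈ Zᗮ, A0 x = 0) {c : ℝ} (hc : c ≠ 0)
    (hK : A2 + c • A0 = 0) : A2 = 0 ∧ A0 = 0 := by
  have hKx (x : E) : A2 x + c • A0 x = 0 := LinearMap.congr_fun hK x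
  constructor <;> ext x <;> rw [LinearMap.zero_apply, ← Submodule.mem_bot ℝ] <;>
    refine map_mem_of_mem_of_mem_orthogonal (K := Z) (fun z hz => ?_) (fun v hv => ?_) x
  · simp [hA2Z z hz]
  · simpa [hA0v v hv] using hKx v
  · simpa [hA2Z z hz, hc] using hKx z
  · simp [hA0v v hv]

theorem map_bracket_of_killing [Z.HasOrthogonalProjection] (h2 : ∀ x y, l x y ∈ Z)
    (hj : ∀ z x y, ⟪j z x, y⟫ = ⟪z, l x y⟫) (hZ : ∀ x, x ∈ Z ↔ ∀ y, l x y = 0)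
    {A2 A0 : E →ₗ[ℝ] E} (hA2 : ∀ a b, ⟪A2 a, b⟫ = -⟪a, A2 b⟫) (hA2Z : ∀ z ∈ Z, A2 z = 0)
    (hA0 : ∀ a b, ⟪A0 a, b⟫ = -⟪a, A0 b⟫) (hA0v : ∀ x ∈ Zᗮ, A0 x = 0)
    (hA0Z : ∀ z ∈ Z, A0 z ∈ Z)
    (hKill : ∀ z ∈ Z, j (A0 z) = (3 : ℝ) • (A2 ∘ₗ j z) ∧ A2 ∘ₗ j z = -(j z ∘ₗ A2)) (x y : E) :
    (A2 + (3 : ℝ)⁻¹ • A0) (l x y) = l ((A2 + (3 : ℝ)⁻¹ • A0) x) y := by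
  have hKz (z : E) (hz : z ∈ Z) : (A2 + (3 : ℝ)⁻¹ • A0) z = (3 : ℝ)⁻¹ • A0 z := by
    simp [hA2Z z hz]
  refine map_bracket_of_j_map_eq_neg_comp h2 hj (skew_add_smul hA2 hA0 _)
    (fun z hz => hKz z hz ▸ Z.smul_mem _ (hA0Z z hz)) (fun z hz => ?_) x y
  have hA0mem (x : E) : A0 x ∈ Z :=
    map_mem_of_mem_of_mem_orthogonal hA0Z (fun x hx => hA0v x hx ▸ Z.zero_mem) x
  ext x
  rw [hKz z hz, j_smul hj, (hKill z hz).1, smul_smul, inv_mul_cancel₀ three_ne_zero, one_smul,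
    (hKill z hz).2]
  simp [j_apply_eq_zero_of_mem hj hZ z (hA0mem x)]

theorem apply_apply_eq_smul_of_comp_self_eq_smul {A2 A0 : E →ₗ[ℝ] E}
    (hA2v : ∀ x ∈ Zᗮ, A2 x ∈ Zᗮ) (hA2Z : ∀ z ∈ Z, A2 z = 0) (hA0v : ∀ x ∈ Zᗮ, A0 x = 0)
    (hA0Z : ∀ z ∈ Z, A0 z ∈ Z) {μ : ℝ}
    (hKK : (A2 + (3 : ℝ)⁻¹ • A0) ∘ₗ (A2 + (3 : ℝ)⁻¹ • A0) = μ • LinearMap.id) :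
    (∀ x ∈ Zᗮ, A2 (A2 x) = μ • x) ∧ ∀ z ∈ Z, A0 (A0 z) = (9 * μ) • z := by
  have hKKx (x : E) := LinearMap.congr_fun hKK x
  refine ⟨fun x hx => ?_, fun z hz => ?_⟩
  · simpa [hA0v x hx, hA0v _ (hA2v x hx)] using hKKx x
  · have hz' := hKKx z
    simp only [LinearMap.comp_apply, LinearMap.add_apply, LinearMap.smul_apply, hA2Z z hz,
      hA2Z _ (hA0Z z hz), map_smul, LinearMap.id_apply, zero_add] at hz'
    rw [mul_smul, ← hz', smul_smul, smul_smul]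
    norm_num

theorem killing_of_isOrthComplexStructure [Z.HasOrthogonalProjection] (hl : l.IsAlt)
    (hj : ∀ z x y, ⟪j z x, y⟫ = ⟪z, l x y⟫) (hZ : ∀ x, x ∈ Z ↔ ∀ y, l x y = 0)
    {J : E →ₗ[ℝ] E} (hJ : IsOrthComplexStructure l J) (z : E) (hz : z ∈ Z) :
    j (((3 : ℝ) • (J ∘ₗ Z.starProjection)) z) =
        (3 : ℝ) • ((J ∘ₗ Zᗮ.starProjection) ∘ₗ j z) ∧
      (J ∘ₗ Zᗮ.starProjection) ∘ₗ j z = -(j z ∘ₗ (J ∘ₗ Zᗮ.starProjection)) := by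
  obtain ⟨hJJ, hJl, hJo⟩ := hJ
  have hJs := (skew_iff_orthogonal_of_comp_self_eq_neg_id hJJ).2 hJo
  have hA2j : (J ∘ₗ Zᗮ.starProjection) ∘ₗ j z = J ∘ₗ j z := by
    ext x
    simp [Submodule.starProjection_eq_self_iff.2 (j_apply_mem_orthogonal hl hj hZ z x)]
  have hjA2 : j z ∘ₗ (J ∘ₗ Zᗮ.starProjection) = j z ∘ₗ J := by
    ext x
    have hJP : J (Z.starProjection x) ∈ Z :=
      map_mem_of_map_bracket hZ hJl (Z.starProjection_apply_mem x)
    simp [Submodule.starProjection_orthogonal, j_apply_eq_zero_of_mem hj hZ z hJP]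
  constructor
  · rw [LinearMap.smul_apply, LinearMap.comp_apply, ContinuousLinearMap.coe_coe,
      Submodule.starProjection_eq_self_iff.2 hz, j_smul hj, hA2j,
      comp_j_eq_j_map_of_map_bracket hl hj hJs hJl]
  · rw [hA2j, hjA2, comp_j_eq_j_map_of_map_bracket hl hj hJs hJl,
      j_map_eq_neg_comp_of_map_bracket hj hJs hJl]

end TwoStep

end InnerProduct

theorem killing_stmt7_general {n : Type*} [NormedAddCommGroup n] [InnerProductSpace ℝ n]
    [FiniteDimensional ℝ n]
    (l : n →ₗ[ℝ] n →ₗ[ℝ] n) (hanti : ∀ x : n, l x x = 0)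
    (Z : Submodule ℝ n) (hZ : ∀ x : n, x ∈ Z ↔ ∀ y : n, l x y = 0)
    (h2 : ∀ x y : n, l x y ∈ Z)
    (j : n → n →ₗ[ℝ] n) (hj : ∀ z x y : n, ⟪j z x, y⟫ = ⟪z, l x y⟫)
    (hirr : ∀ N' N'' : Submodule ℝ n,
      (∀ x ∈ N', ∀ y : n, l x y ∈ N') → (∀ x ∈ N'', ∀ y : n, l x y ∈ N'') →
      (∀ x ∈ N', ∀ y ∈ N'', ⟪x, y⟫ = 0) → N' ⊔ N'' = ⊤ → N' = ⊥ ∨ N'' = ⊥) :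
    -- from a non-zero Killing 2-form to a bi-invariant orthogonal complex structure
    (∀ A2 A0 : n →ₗ[ℝ] n,
      (∀ a b : n, ⟪A2 a, b⟫ = -⟪a, A2 b⟫) → (∀ x ∈ Zᗮ, A2 x ∈ Zᗮ) → (∀ z ∈ Z, A2 z = 0) →
      (∀ a b : n, ⟪A0 a, b⟫ = -⟪a, A0 b⟫) → (∀ x ∈ Zᗮ, A0 x = 0) → (∀ z ∈ Z, A0 z ∈ Z) →
      -- the Killing condition for α = α₂ + α₀
      (∀ z ∈ Z, j (A0 z) = (3 : ℝ) • (A2 ∘ₗ j z) ∧ A2 ∘ₗ j z = -((j z) ∘ₗ A2)) →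
      ¬(A2 = 0 ∧ A0 = 0) →
      ∃ lam : ℝ, lam < 0 ∧
        (∀ x ∈ Zᗮ, A2 (A2 x) = lam • x) ∧
        (∀ z ∈ Z, A0 (A0 z) = (9 * lam) • z) ∧
        ∃ J : n →ₗ[ℝ] n,
          J = (Real.sqrt (-lam))⁻¹ • A2 + ((3 : ℝ) * Real.sqrt (-lam))⁻¹ • A0 ∧
          J ∘ₗ J = -LinearMap.id ∧
          (∀ x y : n, J (l x y) = l (J x) y) ∧
          (∀ a b : n, ⟪J a, J b⟫ = ⟪a, b⟫)) ∧
    -- from a bi-invariant orthogonal complex structure to a Killing 2-form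
    (∀ J : n →ₗ[ℝ] n, J ∘ₗ J = -LinearMap.id →
      (∀ x y : n, J (l x y) = l (J x) y) → (∀ a b : n, ⟪J a, J b⟫ = ⟪a, b⟫) →
      ∃ A2 A0 : n →ₗ[ℝ] n,
        (∀ z ∈ Z, A2 z = 0) ∧ (∀ x ∈ Zᗮ, A2 x = J x) ∧
        (∀ x ∈ Zᗮ, A0 x = 0) ∧ (∀ z ∈ Z, A0 z = (3 : ℝ) • J z) ∧
        (∀ z ∈ Z, j (A0 z) = (3 : ℝ) • (A2 ∘ₗ j z) ∧ A2 ∘ₗ j z = -((j z) ∘ₗ A2))) := by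
  refine ⟨fun A2 A0 hA2 hA2v hA2Z hA0 hA0v hA0Z hKill hne => ?_, fun J hJJ hJl hJo =>
    ⟨J ∘ₗ Zᗮ.starProjection, (3 : ℝ) • (J ∘ₗ Z.starProjection), fun z hz => ?_,
      fun x hx => ?_, fun x hx => ?_, fun z hz => ?_,
      killing_of_isOrthComplexStructure hanti hj hZ ⟨hJJ, hJl, hJo⟩⟩⟩
  · have hK := skew_add_smul hA2 hA0 (3 : ℝ)⁻¹
    have hKl := map_bracket_of_killing h2 hj hZ hA2 hA2Z hA0 hA0v hA0Z hKill
    obtain ⟨μ, hμ, hKK⟩ := IsOrthIrreducible.exists_neg_comp_self_eq_smul_id hirr hK hKl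
      (mt (eq_zero_of_add_smul_eq_zero hA2Z hA0v (inv_ne_zero three_ne_zero)) hne)
    obtain ⟨hA2A2, hA0A0⟩ := apply_apply_eq_smul_of_comp_self_eq_smul hA2v hA2Z hA0v hA0Z hKK
    have hJ : (√(-μ))⁻¹ • A2 + ((3 : ℝ) * √(-μ))⁻¹ • A0 =
        (√(-μ))⁻¹ • (A2 + (3 : ℝ)⁻¹ • A0) := by
      rw [smul_add, smul_smul, mul_inv, mul_comm]
    exact ⟨μ, hμ, hA2A2, hA0A0, _, hJ.symm, isOrthComplexStructure_inv_sqrt_smul hK hKl hKK hμ⟩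
  · simp [Submodule.starProjection_orthogonal_apply_eq_zero hz]
  · simp [Submodule.starProjection_eq_self_iff.2 hx]
  · simp [(Submodule.starProjection_apply_eq_zero_iff _).2 hx]
  · simp [Submodule.starProjection_eq_self_iff.2 hz]

/-- On an irreducible 2-step nilpotent metric Lie algebra there is a
one-to-one correspondence between non-zero Killing 2-forms (up to positive multiple) and
orthogonal bi-invariant complex structures.  Given a Killing 2-form `α = α₂ + α₀` (i.e.
`j(α₀z) = 3α₂ j(z) = −3 j(z) α₂`), there is `λ < 0` with `α₂² = λ Id_v`, `(1/9)α₀² = λ Id_z`,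
and `J := α₂/√(−λ) + α₀/(3√(−λ))` is an orthogonal bi-invariant complex structure.
Conversely, for any orthogonal bi-invariant complex structure `J`, the 2-form
`α := J|_v + 3 J|_z` is Killing. -/
theorem killing_stmt7 {n : Type*} [NormedAddCommGroup n] [InnerProductSpace ℝ n]
    [FiniteDimensional ℝ n]
    (l : n →ₗ[ℝ] n →ₗ[ℝ] n) (hanti : ∀ x : n, l x x = 0)
    (Z : Submodule ℝ n) (hZ : ∀ x : n, x ∈ Z ↔ ∀ y : n, l x y = 0)
    (h2 : ∀ x y : n, l x y ∈ Z) (hna : ∃ x : n, ∃ y : n, l x y ≠ 0)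
    (j : n → n →ₗ[ℝ] n) (hj : ∀ z x y : n, ⟪j z x, y⟫ = ⟪z, l x y⟫)
    (hjinj : ∀ z ∈ Z, j z = 0 → z = 0)
    (hirr : ∀ N' N'' : Submodule ℝ n,
      (∀ x ∈ N', ∀ y : n, l x y ∈ N') → (∀ x ∈ N'', ∀ y : n, l x y ∈ N'') →
      (∀ x ∈ N', ∀ y ∈ N'', ⟪x, y⟫ = 0) → N' ⊔ N'' = ⊤ → N' = ⊥ ∨ N'' = ⊥) :
    -- from a non-zero Killing 2-form to a bi-invariant orthogonal complex structure
    (∀ A2 A0 : n →ₗ[ℝ] n,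
      (∀ a b : n, ⟪A2 a, b⟫ = -⟪a, A2 b⟫) → (∀ x ∈ Zᗮ, A2 x ∈ Zᗮ) → (∀ z ∈ Z, A2 z = 0) →
      (∀ a b : n, ⟪A0 a, b⟫ = -⟪a, A0 b⟫) → (∀ x ∈ Zᗮ, A0 x = 0) → (∀ z ∈ Z, A0 z ∈ Z) →
      -- the Killing condition for α = α₂ + α₀
      (∀ z ∈ Z, j (A0 z) = (3 : ℝ) • (A2 ∘ₗ j z) ∧ A2 ∘ₗ j z = -((j z) ∘ₗ A2)) →
      ¬(A2 = 0 ∧ A0 = 0) →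
      ∃ lam : ℝ, lam < 0 ∧
        (∀ x ∈ Zᗮ, A2 (A2 x) = lam • x) ∧
        (∀ z ∈ Z, A0 (A0 z) = (9 * lam) • z) ∧
        ∃ J : n →ₗ[ℝ] n,
          J = (Real.sqrt (-lam))⁻¹ • A2 + ((3 : ℝ) * Real.sqrt (-lam))⁻¹ • A0 ∧
          J ∘ₗ J = -LinearMap.id ∧
          (∀ x y : n, J (l x y) = l (J x) y) ∧
          (∀ a b : n, ⟪J a, J b⟫ = ⟪a, b⟫)) ∧
    -- from a bi-invariant orthogonal complex structure to a Killing 2-form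
    (∀ J : n →ₗ[ℝ] n, J ∘ₗ J = -LinearMap.id →
      (∀ x y : n, J (l x y) = l (J x) y) → (∀ a b : n, ⟪J a, J b⟫ = ⟪a, b⟫) →
      ∃ A2 A0 : n →ₗ[ℝ] n,
        (∀ z ∈ Z, A2 z = 0) ∧ (∀ x ∈ Zᗮ, A2 x = J x) ∧
        (∀ x ∈ Zᗮ, A0 x = 0) ∧ (∀ z ∈ Z, A0 z = (3 : ℝ) • J z) ∧
        (∀ z ∈ Z, j (A0 z) = (3 : ℝ) • (A2 ∘ₗ j z) ∧ A2 ∘ₗ j z = -((j z) ∘ₗ A2))) :=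
  killing_stmt7_general l hanti Z hZ h2 j hj hirr
end

section
/- If J is a bi-invariant orthogonal complex structure on a 2-step nilpotent metric Lie algebra, then J preserves v and z, and J anti-commutes with j(z) for every z in the center: J j(z) = −j(z) J, and moreover j(z)J = −j(Jz). -/
open scoped RealInnerProductSpace

/-!
An orthogonal `J` with `J² = -1` is skew-adjoint: `⟪J a, b⟫ = ⟪J (J a), J b⟫ = -⟪a, J b⟫`.
Bi-invariance `J [x, y] = [J x, y]` together with antisymmetry of the bracket gives
`[x, J y] = [J x, y]`. Every claim then follows by pairing with a test vector and moving `J`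
across the inner product and through the bracket, using `⟪j z x, y⟫ = ⟪z, [x, y]⟫`.
-/

section SkewAdjoint

variable {E : Type*} [NormedAddCommGroup E] [InnerProductSpace ℝ E] {J : E →ₗ[ℝ] E}

lemma inner_map_left_eq_neg_inner_map_right (hJ2 : J ∘ₗ J = -LinearMap.id)
    (hJorth : ∀ a b : E, ⟪J a, J b⟫ = ⟪a, b⟫) (a b : E) : ⟪J a, b⟫ = -⟪a, J b⟫ := by
  have hJJ : J (J a) = -a := by simpa using LinearMap.congr_fun hJ2 a
  rw [← hJorth (J a) b, hJJ, inner_neg_left]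

lemma map_mem_orthogonal_of_skew (hskew : ∀ a b : E, ⟪J a, b⟫ = -⟪a, J b⟫)
    {Z : Submodule ℝ E} (hJZ : ∀ z ∈ Z, J z ∈ Z) {x : E} (hx : x ∈ Zᗮ) : J x ∈ Zᗮ := by
  intro z hz
  rw [real_inner_comm, hskew, real_inner_comm, hx _ (hJZ z hz), neg_zero]

end SkewAdjoint

section BiInvariant

variable {E : Type*} [NormedAddCommGroup E] [InnerProductSpace ℝ E]
  {l : E →ₗ[ℝ] E →ₗ[ℝ] E} {J : E →ₗ[ℝ] E}

lemma apply_map_eq_zero_of_forall_apply_eq_zero (hJbi : ∀ x y : E, J (l x y) = l (J x) y)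
    {z : E} (hz : ∀ y : E, l z y = 0) (y : E) : l (J z) y = 0 := by
  rw [← hJbi, hz, map_zero]

lemma apply_map_right_eq_apply_map_left (hanti : l.IsAlt)
    (hJbi : ∀ x y : E, J (l x y) = l (J x) y) (x y : E) : l x (J y) = l (J x) y := by
  rw [← hanti.neg, ← hJbi, ← map_neg, hanti.neg, hJbi]

variable {j : E → E →ₗ[ℝ] E} (hj : ∀ z x y : E, ⟪j z x, y⟫ = ⟪z, l x y⟫)
  (hskew : ∀ a b : E, ⟪J a, b⟫ = -⟪a, J b⟫) (hJbi : ∀ x y : E, J (l x y) = l (J x) y)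
include hj hskew hJbi

lemma comp_map_eq_neg_map (z : E) : j z ∘ₗ J = -j (J z) := by
  ext x
  refine ext_inner_right ℝ fun y => ?_
  rw [LinearMap.comp_apply, LinearMap.neg_apply, hj, ← hJbi, real_inner_comm, hskew,
    real_inner_comm, inner_neg_left, hj]

lemma map_comp_eq_neg_comp_map (hanti : l.IsAlt) (z : E) : J ∘ₗ j z = -(j z ∘ₗ J) := by
  ext x
  refine ext_inner_right ℝ fun y => ?_
  rw [LinearMap.comp_apply, LinearMap.neg_apply, LinearMap.comp_apply, hskew, hj,
    inner_neg_left, hj, apply_map_right_eq_apply_map_left hanti hJbi]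

end BiInvariant

theorem killing_stmt8_general {n : Type*} [NormedAddCommGroup n] [InnerProductSpace ℝ n]
    (l : n →ₗ[ℝ] n →ₗ[ℝ] n) (hanti : ∀ x : n, l x x = 0)
    (Z : Submodule ℝ n) (hZ : ∀ x : n, x ∈ Z ↔ ∀ y : n, l x y = 0)
    (j : n → n →ₗ[ℝ] n) (hj : ∀ z x y : n, ⟪j z x, y⟫ = ⟪z, l x y⟫)
    -- J is a bi-invariant orthogonal complex structure
    (J : n →ₗ[ℝ] n) (hJ2 : J ∘ₗ J = -LinearMap.id)
    (hJbi : ∀ x y : n, J (l x y) = l (J x) y)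
    (hJorth : ∀ a b : n, ⟪J a, J b⟫ = ⟪a, b⟫) :
    (∀ z ∈ Z, J z ∈ Z) ∧ (∀ x ∈ Zᗮ, J x ∈ Zᗮ) ∧
    (∀ z ∈ Z, J ∘ₗ (j z) = -((j z) ∘ₗ J) ∧ (j z) ∘ₗ J = -(j (J z))) := by
  have hskew := inner_map_left_eq_neg_inner_map_right hJ2 hJorth
  have hJZ : ∀ z ∈ Z, J z ∈ Z := fun z hz =>
    (hZ _).2 (apply_map_eq_zero_of_forall_apply_eq_zero hJbi ((hZ z).1 hz))
  exact ⟨hJZ, fun x => map_mem_orthogonal_of_skew hskew hJZ, fun z _ =>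
    ⟨map_comp_eq_neg_comp_map hj hskew hJbi hanti z, comp_map_eq_neg_map hj hskew hJbi z⟩⟩

/-- If `J` is a bi-invariant orthogonal complex structure on a 2-step
nilpotent metric Lie algebra, then `J` preserves `v = z^⊥` and `z`, it anti-commutes with
`j z` for every central `z` (`J j(z) = −j(z) J`), and moreover `j(z) J = −j(Jz)`. -/
theorem killing_stmt8 {n : Type*} [NormedAddCommGroup n] [InnerProductSpace ℝ n]
    [FiniteDimensional ℝ n]
    (l : n →ₗ[ℝ] n →ₗ[ℝ] n) (hanti : ∀ x : n, l x x = 0)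
    (Z : Submodule ℝ n) (hZ : ∀ x : n, x ∈ Z ↔ ∀ y : n, l x y = 0)
    (h2 : ∀ x y : n, l x y ∈ Z) (hna : ∃ x : n, ∃ y : n, l x y ≠ 0)
    (j : n → n →ₗ[ℝ] n) (hj : ∀ z x y : n, ⟪j z x, y⟫ = ⟪z, l x y⟫)
    -- J is a bi-invariant orthogonal complex structure
    (J : n →ₗ[ℝ] n) (hJ2 : J ∘ₗ J = -LinearMap.id)
    (hJbi : ∀ x y : n, J (l x y) = l (J x) y)
    (hJorth : ∀ a b : n, ⟪J a, J b⟫ = ⟪a, b⟫) :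
    (∀ z ∈ Z, J z ∈ Z) ∧ (∀ x ∈ Zᗮ, J x ∈ Zᗮ) ∧
    (∀ z ∈ Z, J ∘ₗ (j z) = -((j z) ∘ₗ J) ∧ (j z) ∘ₗ J = -(j (J z))) :=
  killing_stmt8_general l hanti Z hZ j hj J hJ2 hJbi hJorth
end

section
/- Every Killing 2-form on a reducible 2-step nilpotent metric Lie algebra n = n' ⊕ n'' (orthogonal direct sum of ideals, with j injective) decomposes as α = α' + α'' with α' a Killing 2-form on n' and α'' a Killing 2-form on n''. -/
open scoped RealInnerProductSpace

/-!
Let `P` be the orthogonal projection onto `n'`. Since `n'' = n'ᗮ` and both are ideals, `P` commutes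
with the bracket, `P [x, y] = [P x, y] = [x, P y]`; so `P` preserves the centre `z` and, being
self-adjoint, also `v = zᗮ`. The Killing equations force `α₂` and `α₀` to commute with `P`: for
`x ∈ v` the vector `P α₂ x - α₂ P x` lies in `v` and brackets trivially with `v`, hence is zero;
`P α₀ - α₀ P` is self-adjoint, kills `[n, n]` and maps `z` into `z`, so by injectivity of `j` it
vanishes on `z`. Then `α' = α ∘ P` and `α'' = α ∘ (1 - P)`.
-/

section
variable {E : Type*} [NormedAddCommGroup E] [InnerProductSpace ℝ E]

theorem Submodule.eq_orthogonal_of_sup_eq_top {K L : Submodule ℝ E}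
    (horth : ∀ x ∈ K, ∀ y ∈ L, ⟪x, y⟫ = 0) (hsup : K ⊔ L = ⊤) : L = Kᗮ :=
  eq_of_le_of_inf_le_of_le_sup (fun y hy => (K.mem_orthogonal y).2 fun x hx => horth x hx y hy)
    (K.orthogonal_disjoint.symm.eq_bot ▸ bot_le) (by rw [sup_comm, hsup]; exact le_top)

variable {l : E →ₗ[ℝ] E →ₗ[ℝ] E} {Z K : Submodule ℝ E}

theorem lie_eq_zero_of_mem_center_right (hl : l.IsAlt) (hZ : ∀ z, z ∈ Z ↔ ∀ y, l z y = 0)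
    (x : E) {z : E} (hz : z ∈ Z) : l x z = 0 := by
  rw [← hl.neg, (hZ z).1 hz x, neg_zero]

theorem mem_center_of_forall_orthogonal [Z.HasOrthogonalProjection] (hl : l.IsAlt)
    (hZ : ∀ z, z ∈ Z ↔ ∀ y, l z y = 0) {d : E} (hd : ∀ y ∈ Zᗮ, l d y = 0) : d ∈ Z := by
  refine (hZ d).2 fun y => ?_
  rw [← Z.starProjection_add_starProjection_orthogonal y, map_add,
    lie_eq_zero_of_mem_center_right hl hZ d (Z.starProjection_apply_mem y),
    hd _ (Zᗮ.starProjection_apply_mem y), add_zero]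

theorem lie_starProjection_orthogonal_center [Z.HasOrthogonalProjection] (hl : l.IsAlt)
    (hZ : ∀ z, z ∈ Z ↔ ∀ y, l z y = 0) (x y : E) :
    l (Zᗮ.starProjection x) (Zᗮ.starProjection y) = l x y := by
  conv_rhs => rw [← Z.starProjection_add_starProjection_orthogonal x,
    ← Z.starProjection_add_starProjection_orthogonal y]
  simp only [map_add, LinearMap.add_apply, (hZ _).1 (Z.starProjection_apply_mem x),
    lie_eq_zero_of_mem_center_right hl hZ _ (Z.starProjection_apply_mem y), zero_add]

theorem eq_zero_of_forall_inner_lie_eq_zero {j : E → E →ₗ[ℝ] E}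
    (hj : ∀ z x y, ⟪j z x, y⟫ = ⟪z, l x y⟫) (hjinj : ∀ z ∈ Z, j z = 0 → z = 0)
    {z : E} (hz : z ∈ Z) (h : ∀ x y, ⟪z, l x y⟫ = 0) : z = 0 :=
  hjinj z hz <| LinearMap.ext fun x => ext_inner_right ℝ fun y => by
    rw [hj, h, LinearMap.zero_apply, inner_zero_left]

variable [K.HasOrthogonalProjection]

theorem starProjection_lie (hK : ∀ x ∈ K, ∀ y, l x y ∈ K) (hK' : ∀ x ∈ Kᗮ, ∀ y, l x y ∈ Kᗮ)
    (x y : E) : K.starProjection (l x y) = l (K.starProjection x) y := by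
  conv_lhs => rw [← K.starProjection_add_starProjection_orthogonal x]
  rw [map_add, LinearMap.add_apply, map_add,
    K.starProjection_eq_self_iff.2 (hK _ (K.starProjection_apply_mem x) y),
    (K.starProjection_apply_eq_zero_iff).2 (hK' _ (Kᗮ.starProjection_apply_mem x) y), add_zero]

theorem starProjection_lie_right (hl : l.IsAlt) (hK : ∀ x ∈ K, ∀ y, l x y ∈ K)
    (hK' : ∀ x ∈ Kᗮ, ∀ y, l x y ∈ Kᗮ) (x y : E) :
    K.starProjection (l x y) = l x (K.starProjection y) := by
  rw [← hl.neg, map_neg, starProjection_lie hK hK', hl.neg]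

theorem starProjection_mem_center (hK : ∀ x ∈ K, ∀ y, l x y ∈ K)
    (hK' : ∀ x ∈ Kᗮ, ∀ y, l x y ∈ Kᗮ) (hZ : ∀ z, z ∈ Z ↔ ∀ y, l z y = 0) {z : E} (hz : z ∈ Z) :
    K.starProjection z ∈ Z :=
  (hZ _).2 fun y => by rw [← starProjection_lie hK hK', (hZ z).1 hz y, map_zero]

theorem starProjection_mem_orthogonal_center (hK : ∀ x ∈ K, ∀ y, l x y ∈ K)
    (hK' : ∀ x ∈ Kᗮ, ∀ y, l x y ∈ Kᗮ) (hZ : ∀ z, z ∈ Z ↔ ∀ y, l z y = 0) {v : E} (hv : v ∈ Zᗮ) :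
    K.starProjection v ∈ Zᗮ := fun z hz => by
  rw [← K.inner_starProjection_left_eq_right]
  exact hv _ (starProjection_mem_center hK hK' hZ hz)

def IsKillingOn (l : E →ₗ[ℝ] E →ₗ[ℝ] E) (A2 A0 : Module.End ℝ E) (S : Submodule ℝ E) : Prop :=
  ∀ x ∈ S, ∀ y ∈ S,
    A0 (l x y) = (3 : ℝ) • l (A2 x) y ∧ (3 : ℝ) • l (A2 x) y = (3 : ℝ) • l x (A2 y)

variable {A2 A0 : Module.End ℝ E} {S : Submodule ℝ E}

theorem IsKillingOn.lie_apply_comm (h : IsKillingOn l A2 A0 S) {x y : E} (hx : x ∈ S)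
    (hy : y ∈ S) : l (A2 x) y = l x (A2 y) :=
  smul_right_injective E three_ne_zero (h x hx y hy).2

theorem IsKillingOn.comp_starProjection (h : IsKillingOn l A2 A0 S)
    (hK : ∀ x ∈ K, ∀ y, l x y ∈ K) :
    IsKillingOn l (A2 ∘ₗ K.starProjection) (A0 ∘ₗ K.starProjection) (S ⊓ K) := by
  rintro x ⟨hxS, hxK⟩ y ⟨hyS, hyK⟩
  simp only [LinearMap.comp_apply, ContinuousLinearMap.coe_coe,
    K.starProjection_eq_self_iff.2 hxK, K.starProjection_eq_self_iff.2 hyK,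
    K.starProjection_eq_self_iff.2 (hK x hxK y)]
  exact h x hxS y hyS

theorem commute_starProjection_of_isKillingOn₂ [Z.HasOrthogonalProjection] (hl : l.IsAlt)
    (hZ : ∀ z, z ∈ Z ↔ ∀ y, l z y = 0)
    (hA2V : ∀ x ∈ Zᗮ, A2 x ∈ Zᗮ) (hA2Z : ∀ z ∈ Z, A2 z = 0) (hkill : IsKillingOn l A2 A0 Zᗮ)
    (hK : ∀ x ∈ K, ∀ y, l x y ∈ K) (hK' : ∀ x ∈ Kᗮ, ∀ y, l x y ∈ Kᗮ) :
    Commute (K.starProjection : Module.End ℝ E) A2 := by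
  refine LinearMap.ext_on_codisjoint Z.isCompl_orthogonal.codisjoint (fun z hz => ?_)
    (fun x hx => ?_)
  · simp [hA2Z z hz, hA2Z _ (starProjection_mem_center hK hK' hZ hz)]
  · have hPx : K.starProjection x ∈ Zᗮ := starProjection_mem_orthogonal_center hK hK' hZ hx
    have hdV : K.starProjection (A2 x) - A2 (K.starProjection x) ∈ Zᗮ :=
      sub_mem (starProjection_mem_orthogonal_center hK hK' hZ (hA2V x hx)) (hA2V _ hPx)
    have hdZ : K.starProjection (A2 x) - A2 (K.starProjection x) ∈ Z :=
      mem_center_of_forall_orthogonal hl hZ fun y hy => by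
        rw [map_sub, LinearMap.sub_apply, ← starProjection_lie hK hK', hkill.lie_apply_comm hx hy,
          starProjection_lie hK hK', hkill.lie_apply_comm hPx hy, sub_self]
    exact sub_eq_zero.1 (Submodule.disjoint_def.1 Z.orthogonal_disjoint _ hdZ hdV)

theorem commute_starProjection_of_isKillingOn₀ [Z.HasOrthogonalProjection] (hl : l.IsAlt)
    (hZ : ∀ z, z ∈ Z ↔ ∀ y, l z y = 0)
    {j : E → E →ₗ[ℝ] E} (hj : ∀ z x y, ⟪j z x, y⟫ = ⟪z, l x y⟫)
    (hjinj : ∀ z ∈ Z, j z = 0 → z = 0) (hA0skew : ∀ a b, ⟪A0 a, b⟫ = -⟪a, A0 b⟫)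
    (hA0V : ∀ x ∈ Zᗮ, A0 x = 0) (hA0Z : ∀ z ∈ Z, A0 z ∈ Z) (hkill : IsKillingOn l A2 A0 Zᗮ)
    (hK : ∀ x ∈ K, ∀ y, l x y ∈ K) (hK' : ∀ x ∈ Kᗮ, ∀ y, l x y ∈ Kᗮ) :
    Commute (K.starProjection : Module.End ℝ E) A0 := by
  have hlie : ∀ x y, K.starProjection (A0 (l x y)) = A0 (K.starProjection (l x y)) := by
    intro x y
    rw [← lie_starProjection_orthogonal_center hl hZ x y]
    set u := Zᗮ.starProjection x
    set v := Zᗮ.starProjection y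
    have hu : u ∈ Zᗮ := Zᗮ.starProjection_apply_mem x
    have hv : v ∈ Zᗮ := Zᗮ.starProjection_apply_mem y
    calc K.starProjection (A0 (l u v))
        = (3 : ℝ) • K.starProjection (l (A2 u) v) := by rw [(hkill u hu v hv).1, map_smul]
      _ = (3 : ℝ) • l (A2 u) (K.starProjection v) := by rw [starProjection_lie_right hl hK hK']
      _ = A0 (l u (K.starProjection v)) :=
        (hkill u hu _ (starProjection_mem_orthogonal_center hK hK' hZ hv)).1.symm
      _ = A0 (K.starProjection (l u v)) := by rw [starProjection_lie_right hl hK hK']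
  refine LinearMap.ext_on_codisjoint Z.isCompl_orthogonal.codisjoint (fun z hz => ?_)
    (fun v hv => ?_)
  · have hd : K.starProjection (A0 z) - A0 (K.starProjection z) ∈ Z :=
      sub_mem (starProjection_mem_center hK hK' hZ (hA0Z z hz))
        (hA0Z _ (starProjection_mem_center hK hK' hZ hz))
    refine sub_eq_zero.1 (eq_zero_of_forall_inner_lie_eq_zero hj hjinj hd fun x y => ?_)
    rw [Module.End.mul_apply, Module.End.mul_apply, ContinuousLinearMap.coe_coe, inner_sub_left,
      K.inner_starProjection_left_eq_right, hA0skew, hA0skew,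
      K.inner_starProjection_left_eq_right, hlie, sub_self]
  · simp [hA0V v hv, hA0V _ (starProjection_mem_orthogonal_center hK hK' hZ hv)]

theorem Commute.apply_starProjection_mem {T : Module.End ℝ E}
    (h : Commute (K.starProjection : Module.End ℝ E) T) (a : E) : T (K.starProjection a) ∈ K :=
  (LinearMap.congr_fun h.eq a : K.starProjection (T a) = _) ▸ K.starProjection_apply_mem (T a)

theorem comp_starProjection_add_comp_starProjection_orthogonal (T : Module.End ℝ E) :
    T ∘ₗ K.starProjection + T ∘ₗ Kᗮ.starProjection = T :=
  LinearMap.ext fun x => by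
    simp only [LinearMap.add_apply, LinearMap.comp_apply, ContinuousLinearMap.coe_coe, ← map_add,
      K.starProjection_add_starProjection_orthogonal]

end

theorem killing_stmt11_general {n : Type*} [NormedAddCommGroup n] [InnerProductSpace ℝ n]
    [FiniteDimensional ℝ n]
    (l : n →ₗ[ℝ] n →ₗ[ℝ] n) (hanti : ∀ x : n, l x x = 0)
    (Z : Submodule ℝ n) (hZ : ∀ x : n, x ∈ Z ↔ ∀ y : n, l x y = 0)
    (j : n → n →ₗ[ℝ] n) (hj : ∀ z x y : n, ⟪j z x, y⟫ = ⟪z, l x y⟫)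
    (hjinj : ∀ z ∈ Z, j z = 0 → z = 0)
    -- the orthogonal decomposition into ideals n = N' ⊕ N''
    (N' N'' : Submodule ℝ n)
    (hN'id : ∀ x ∈ N', ∀ y : n, l x y ∈ N') (hN''id : ∀ x ∈ N'', ∀ y : n, l x y ∈ N'')
    (horth : ∀ x ∈ N', ∀ y ∈ N'', ⟪x, y⟫ = 0) (hsup : N' ⊔ N'' = ⊤)
    -- a Killing 2-form α = α₂ + α₀ on n
    (A2 A0 : n →ₗ[ℝ] n)
    (hA2V : ∀ x ∈ Zᗮ, A2 x ∈ Zᗮ) (hA2Z : ∀ z ∈ Z, A2 z = 0)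
    (hA0skew : ∀ a b : n, ⟪A0 a, b⟫ = -⟪a, A0 b⟫)
    (hA0V : ∀ x ∈ Zᗮ, A0 x = 0) (hA0Z : ∀ z ∈ Z, A0 z ∈ Z)
    (hkill : ∀ x ∈ Zᗮ, ∀ y ∈ Zᗮ,
      A0 (l x y) = (3 : ℝ) • l (A2 x) y ∧
      (3 : ℝ) • l (A2 x) y = (3 : ℝ) • l x (A2 y)) :
    ∃ A2' A2'' A0' A0'' : n →ₗ[ℝ] n,
      A2 = A2' + A2'' ∧ A0 = A0' + A0'' ∧
      -- α' is supported on N', α'' on N''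
      (∀ a : n, A2' a ∈ N') ∧ (∀ a ∈ N'', A2' a = 0) ∧
      (∀ a : n, A0' a ∈ N') ∧ (∀ a ∈ N'', A0' a = 0) ∧
      (∀ a : n, A2'' a ∈ N'') ∧ (∀ a ∈ N', A2'' a = 0) ∧
      (∀ a : n, A0'' a ∈ N'') ∧ (∀ a ∈ N', A0'' a = 0) ∧
      -- α' is a Killing 2-form on n'
      (∀ x ∈ Zᗮ ⊓ N', ∀ y ∈ Zᗮ ⊓ N',
        A0' (l x y) = (3 : ℝ) • l (A2' x) y ∧
        (3 : ℝ) • l (A2' x) y = (3 : ℝ) • l x (A2' y)) ∧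
      -- α'' is a Killing 2-form on n''
      (∀ x ∈ Zᗮ ⊓ N'', ∀ y ∈ Zᗮ ⊓ N'',
        A0'' (l x y) = (3 : ℝ) • l (A2'' x) y ∧
        (3 : ℝ) • l (A2'' x) y = (3 : ℝ) • l x (A2'' y)) := by
  obtain rfl : N'' = N'ᗮ := N'.eq_orthogonal_of_sup_eq_top horth hsup
  have hN'orth : ∀ x ∈ N'ᗮᗮ, ∀ y, l x y ∈ N'ᗮᗮ := by rwa [N'.orthogonal_orthogonal]
  have hkill : IsKillingOn l A2 A0 Zᗮ := hkill
  have hA2' := commute_starProjection_of_isKillingOn₂ hanti hZ hA2V hA2Z hkill hN'id hN''id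
  have hA2'' := commute_starProjection_of_isKillingOn₂ hanti hZ hA2V hA2Z hkill hN''id hN'orth
  have hA0' := commute_starProjection_of_isKillingOn₀ hanti hZ hj hjinj hA0skew hA0V hA0Z hkill
    hN'id hN''id
  have hA0'' := commute_starProjection_of_isKillingOn₀ hanti hZ hj hjinj hA0skew hA0V hA0Z hkill
    hN''id hN'orth
  refine ⟨A2 ∘ₗ N'.starProjection, A2 ∘ₗ N'ᗮ.starProjection, A0 ∘ₗ N'.starProjection,
    A0 ∘ₗ N'ᗮ.starProjection, (comp_starProjection_add_comp_starProjection_orthogonal A2).symm,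
    (comp_starProjection_add_comp_starProjection_orthogonal A0).symm, hA2'.apply_starProjection_mem,
    fun a ha => ?_, hA0'.apply_starProjection_mem, fun a ha => ?_,
    hA2''.apply_starProjection_mem, fun a ha => ?_, hA0''.apply_starProjection_mem, fun a ha => ?_,
    hkill.comp_starProjection hN'id, hkill.comp_starProjection hN''id⟩ <;>
  simp [N'.starProjection_apply_eq_zero_iff.2, N'.starProjection_orthogonal_apply_eq_zero, ha]

/-- Every Killing 2-form on a reducible 2-step nilpotent metric Lie algebra
`n = n' ⊕ n''` (orthogonal direct sum of ideals, `j` injective) decomposes as `α = α' + α''`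
where `α'` and `α''` are Killing 2-forms on `n'` and `n''` respectively. -/
theorem killing_stmt11 {n : Type*} [NormedAddCommGroup n] [InnerProductSpace ℝ n]
    [FiniteDimensional ℝ n]
    (l : n →ₗ[ℝ] n →ₗ[ℝ] n) (hanti : ∀ x : n, l x x = 0)
    (Z : Submodule ℝ n) (hZ : ∀ x : n, x ∈ Z ↔ ∀ y : n, l x y = 0)
    (h2 : ∀ x y : n, l x y ∈ Z) (hna : ∃ x : n, ∃ y : n, l x y ≠ 0)
    (j : n → n →ₗ[ℝ] n) (hj : ∀ z x y : n, ⟪j z x, y⟫ = ⟪z, l x y⟫)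
    (hjinj : ∀ z ∈ Z, j z = 0 → z = 0)
    -- the orthogonal decomposition into ideals n = N' ⊕ N''
    (N' N'' : Submodule ℝ n)
    (hN'id : ∀ x ∈ N', ∀ y : n, l x y ∈ N') (hN''id : ∀ x ∈ N'', ∀ y : n, l x y ∈ N'')
    (horth : ∀ x ∈ N', ∀ y ∈ N'', ⟪x, y⟫ = 0) (hsup : N' ⊔ N'' = ⊤)
    -- a Killing 2-form α = α₂ + α₀ on n
    (A2 A0 : n →ₗ[ℝ] n)
    (hA2skew : ∀ a b : n, ⟪A2 a, b⟫ = -⟪a, A2 b⟫)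
    (hA2V : ∀ x ∈ Zᗮ, A2 x ∈ Zᗮ) (hA2Z : ∀ z ∈ Z, A2 z = 0)
    (hA0skew : ∀ a b : n, ⟪A0 a, b⟫ = -⟪a, A0 b⟫)
    (hA0V : ∀ x ∈ Zᗮ, A0 x = 0) (hA0Z : ∀ z ∈ Z, A0 z ∈ Z)
    (hkill : ∀ x ∈ Zᗮ, ∀ y ∈ Zᗮ,
      A0 (l x y) = (3 : ℝ) • l (A2 x) y ∧
      (3 : ℝ) • l (A2 x) y = (3 : ℝ) • l x (A2 y)) :
    ∃ A2' A2'' A0' A0'' : n →ₗ[ℝ] n,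
      A2 = A2' + A2'' ∧ A0 = A0' + A0'' ∧
      -- α' is supported on N', α'' on N''
      (∀ a : n, A2' a ∈ N') ∧ (∀ a ∈ N'', A2' a = 0) ∧
      (∀ a : n, A0' a ∈ N') ∧ (∀ a ∈ N'', A0' a = 0) ∧
      (∀ a : n, A2'' a ∈ N'') ∧ (∀ a ∈ N', A2'' a = 0) ∧
      (∀ a : n, A0'' a ∈ N'') ∧ (∀ a ∈ N', A0'' a = 0) ∧
      -- α' is a Killing 2-form on n'
      (∀ x ∈ Zᗮ ⊓ N', ∀ y ∈ Zᗮ ⊓ N',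
        A0' (l x y) = (3 : ℝ) • l (A2' x) y ∧
        (3 : ℝ) • l (A2' x) y = (3 : ℝ) • l x (A2' y)) ∧
      -- α'' is a Killing 2-form on n''
      (∀ x ∈ Zᗮ ⊓ N'', ∀ y ∈ Zᗮ ⊓ N'',
        A0'' (l x y) = (3 : ℝ) • l (A2'' x) y ∧
        (3 : ℝ) • l (A2'' x) y = (3 : ℝ) • l x (A2'' y)) :=
  killing_stmt11_general l hanti Z hZ j hj hjinj N' N'' hN'id hN''id horth hsup A2 A0 hA2V hA2Z
    hA0skew hA0V hA0Z hkill
end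

section
/- If α is a Killing 3-form on a 2-step nilpotent metric Lie algebra, then its components α₁ ∈ v* ⊗ Λ²z* and α₃ ∈ Λ³v* both vanish; i.e. α = β + γ with β ∈ Λ²v* ⊗ z* and γ ∈ Λ³z*. -/
/-!
On a 2-step nilpotent metric Lie algebra the Levi-Civita connection is explicit:
`∇_x y = ½ [x, y]` on `v`, `∇_x z = ∇_z x = -½ j(z) x` and `∇_z z' = 0`. Inserting this into the
polarized Killing identity with one argument in `v` and one in `z` gives linear relations between
the values of `α` on vectors `j(z) x`, first with two further arguments in `z`, then with two in
`v`; in both cases they force these values to vanish. The vectors `j(z) x` span `v`, because a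
vector `y ∈ v` orthogonal to all of them has `⟨j([x, y]) x, y⟩ = ‖[x, y]‖² = 0` for every `x`, so
it is central. Hence `α₁ = 0` and `α₃ = 0`.
-/

open scoped RealInnerProductSpace

namespace AlternatingMap

variable {R M N : Type*} [CommRing R] [AddCommGroup M] [Module R M] [AddCommGroup N] [Module R N]
  (f : M [⋀^Fin 3]→ₗ[R] N) (a b c : M)

theorem map_vec3_add_mid (b' : M) : f ![a, b + b', c] = f ![a, b, c] + f ![a, b', c] :=
  (f.curryLeft a).map_vecCons_add ![c] b b'

theorem map_vec3_add_right (c' : M) : f ![a, b, c + c'] = f ![a, b, c] + f ![a, b, c'] :=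
  ((f.curryLeft a).curryLeft b).map_vecCons_add ![] c c'

theorem map_vec3_smul_mid (r : R) : f ![a, r • b, c] = r • f ![a, b, c] :=
  (f.curryLeft a).map_vecCons_smul ![c] r b

theorem map_vec3_smul_right (r : R) : f ![a, b, r • c] = r • f ![a, b, c] :=
  ((f.curryLeft a).curryLeft b).map_vecCons_smul ![] r c

theorem map_vec3_neg_left : f ![-a, b, c] = -f ![a, b, c] := by
  rw [← neg_one_smul R a, map_vecCons_smul, neg_one_smul]

theorem map_vec3_zero_left : f ![0, b, c] = 0 := f.map_coord_zero 0 rfl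

theorem map_vec3_zero_mid : f ![a, 0, c] = 0 := f.map_coord_zero 1 rfl

theorem map_vec3_zero_right : f ![a, b, 0] = 0 := f.map_coord_zero 2 rfl

theorem map_vec3_swap_left : f ![b, a, c] = -f ![a, b, c] := by
  rw [← f.map_swap ![a, b, c] (show (0 : Fin 3) ≠ 1 by decide)]
  congr 1; ext i; fin_cases i <;> rfl

theorem map_vec3_swap_right : f ![a, c, b] = -f ![a, b, c] := by
  rw [← f.map_swap ![a, b, c] (show (1 : Fin 3) ≠ 2 by decide)]
  congr 1; ext i; fin_cases i <;> rfl

theorem map_vec3_eq_zero_of_mem_span {s : Set M} (h : ∀ x ∈ s, f ![x, b, c] = 0) {x : M}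
    (hx : x ∈ Submodule.span R s) : f ![x, b, c] = 0 := by
  induction hx using Submodule.span_induction with
  | mem y hy => exact h y hy
  | zero => exact f.map_vec3_zero_left b c
  | add y y' _ _ hy hy' => rw [map_vecCons_add, hy, hy', add_zero]
  | smul r y _ hy => rw [map_vecCons_smul, hy, smul_zero]

end AlternatingMap

section Killing

variable {R M : Type*} [CommRing R] [AddCommGroup M] [Module R M]

/-- For a left-invariant `α`, the sum below is `-(∇_y α)(y, a, b)`. -/
def IsKilling (D : M →ₗ[R] M →ₗ[R] M) (α : M [⋀^Fin 3]→ₗ[R] R) : Prop :=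
  ∀ y a b : M, α ![D y y, a, b] + α ![y, D y a, b] + α ![y, a, D y b] = 0

theorem IsKilling.polarization {D : M →ₗ[R] M →ₗ[R] M} {α : M [⋀^Fin 3]→ₗ[R] R}
    (h : IsKilling D α) (y w a b : M) :
    α ![D y w + D w y, a, b] + α ![y, D w a, b] + α ![w, D y a, b] + α ![y, a, D w b]
      + α ![w, a, D y b] = 0 := by
  have hyw := h (y + w) a b
  simp only [map_add, LinearMap.add_apply, AlternatingMap.map_vecCons_add,
    AlternatingMap.map_vec3_add_mid, AlternatingMap.map_vec3_add_right] at hyw ⊢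
  linear_combination hyw - h y a b - h w a b

end Killing

section Metric

variable {E : Type*} [NormedAddCommGroup E] [InnerProductSpace ℝ E]

def IsJMap (l : E →ₗ[ℝ] E →ₗ[ℝ] E) (j : E → E →ₗ[ℝ] E) : Prop :=
  ∀ z x y : E, ⟪j z x, y⟫ = ⟪z, l x y⟫

def IsKoszulConnection (l nabla : E →ₗ[ℝ] E →ₗ[ℝ] E) : Prop :=
  ∀ x y w : E, 2 * ⟪nabla x y, w⟫ = ⟪l x y, w⟫ + ⟪l w x, y⟫ + ⟪l w y, x⟫

theorem IsJMap.add_left {l : E →ₗ[ℝ] E →ₗ[ℝ] E} {j : E → E →ₗ[ℝ] E} (hj : IsJMap l j)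
    (z w x : E) : j (z + w) x = j z x + j w x :=
  ext_inner_right ℝ fun y => by rw [inner_add_left, hj, hj, hj, inner_add_left]

end Metric

structure IsTwoStepNilpotent {R M : Type*} [CommRing R] [AddCommGroup M] [Module R M]
    (l : M →ₗ[R] M →ₗ[R] M) (Z : Submodule R M) : Prop where
  apply_self (x : M) : l x x = 0
  mem_iff (x : M) : x ∈ Z ↔ ∀ y, l x y = 0
  apply_mem (x y : M) : l x y ∈ Z

namespace IsTwoStepNilpotent

section Algebra

variable {R M : Type*} [CommRing R] [AddCommGroup M] [Module R M]
  {l : M →ₗ[R] M →ₗ[R] M} {Z : Submodule R M}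

theorem apply_swap (hl : IsTwoStepNilpotent l Z) (x y : M) : l y x = -l x y := by
  rw [eq_neg_iff_add_eq_zero, add_comm]
  simpa [hl.apply_self] using hl.apply_self (x + y)

theorem apply_eq_zero_of_mem_left (hl : IsTwoStepNilpotent l Z) {z : M} (hz : z ∈ Z) (y : M) :
    l z y = 0 :=
  (hl.mem_iff z).1 hz y

theorem apply_eq_zero_of_mem_right (hl : IsTwoStepNilpotent l Z) {z : M} (hz : z ∈ Z)
    (y : M) : l y z = 0 := by
  rw [hl.apply_swap, hl.apply_eq_zero_of_mem_left hz, neg_zero]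

end Algebra

variable {E : Type*} [NormedAddCommGroup E] [InnerProductSpace ℝ E]
  {l : E →ₗ[ℝ] E →ₗ[ℝ] E} {Z : Submodule ℝ E} {j : E → E →ₗ[ℝ] E} {nabla : E →ₗ[ℝ] E →ₗ[ℝ] E}

theorem j_eq_zero_of_mem (hl : IsTwoStepNilpotent l Z) (hj : IsJMap l j)
    (z : E) {x : E} (hx : x ∈ Z) : j z x = 0 :=
  ext_inner_right ℝ fun y => by rw [hj, hl.apply_eq_zero_of_mem_left hx, inner_zero_right,
    inner_zero_left]

theorem orthogonal_le_span_j [FiniteDimensional ℝ E] (hl : IsTwoStepNilpotent l Z)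
    (hj : IsJMap l j) :
    Zᗮ ≤ Submodule.span ℝ (Set.image2 (fun z x => j z x) Z Zᗮ) := by
  suffices h : (Submodule.span ℝ (Set.image2 (fun z x => j z x) Z Zᗮ))ᗮ ≤ Z by
    simpa only [Submodule.orthogonal_orthogonal] using Submodule.orthogonal_le h
  intro y hy
  have hcomm : ∀ x ∈ Zᗮ, l x y = 0 := fun x hx => by
    have hmem : j (l x y) x ∈ Submodule.span ℝ (Set.image2 (fun z x => j z x) Z Zᗮ) :=
      Submodule.subset_span ⟨l x y, hl.apply_mem x y, x, hx, rfl⟩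
    have := Submodule.inner_right_of_mem_orthogonal hmem hy
    rw [hj] at this
    exact inner_self_eq_zero.1 this
  refine (hl.mem_iff y).2 fun w => ?_
  obtain ⟨z, hz, v, hv, rfl⟩ := Z.exists_add_mem_mem_orthogonal w
  rw [map_add, hl.apply_eq_zero_of_mem_right hz, hl.apply_swap, hcomm v hv, neg_zero, add_zero]

theorem nabla_of_mem_right (hl : IsTwoStepNilpotent l Z) (hj : IsJMap l j)
    (hnab : IsKoszulConnection l nabla) (x : E) {z : E} (hz : z ∈ Z) :
    nabla x z = -(1 / 2 : ℝ) • j z x :=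
  ext_inner_right ℝ fun w => by
    have h := hnab x z w
    rw [hl.apply_eq_zero_of_mem_right hz, hl.apply_eq_zero_of_mem_right hz, inner_zero_left,
      inner_zero_left] at h
    rw [real_inner_smul_left, hj, hl.apply_swap w x, inner_neg_right]
    linarith [real_inner_comm z (l w x)]

theorem nabla_of_mem_left (hl : IsTwoStepNilpotent l Z) (hj : IsJMap l j)
    (hnab : IsKoszulConnection l nabla) {z : E} (hz : z ∈ Z) (x : E) :
    nabla z x = -(1 / 2 : ℝ) • j z x :=
  ext_inner_right ℝ fun w => by
    have h := hnab z x w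
    rw [hl.apply_eq_zero_of_mem_left hz, hl.apply_eq_zero_of_mem_right hz, inner_zero_left,
      inner_zero_left] at h
    rw [real_inner_smul_left, hj, hl.apply_swap w x, inner_neg_right]
    linarith [real_inner_comm z (l w x)]

theorem nabla_of_mem_orthogonal (hl : IsTwoStepNilpotent l Z) (hnab : IsKoszulConnection l nabla)
    {x y : E} (hx : x ∈ Zᗮ) (hy : y ∈ Zᗮ) : nabla x y = (1 / 2 : ℝ) • l x y :=
  ext_inner_right ℝ fun w => by
    have h := hnab x y w
    rw [Submodule.inner_right_of_mem_orthogonal (hl.apply_mem w x) hy,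
      Submodule.inner_right_of_mem_orthogonal (hl.apply_mem w y) hx] at h
    rw [real_inner_smul_left]
    linarith

theorem nabla_of_mem_of_mem (hl : IsTwoStepNilpotent l Z) (hj : IsJMap l j)
    (hnab : IsKoszulConnection l nabla) {z z' : E} (hz : z ∈ Z) (hz' : z' ∈ Z) :
    nabla z z' = 0 := by
  rw [hl.nabla_of_mem_left hj hnab hz, hl.j_eq_zero_of_mem hj z hz', smul_zero]

theorem nabla_add_nabla_swap_of_mem (hl : IsTwoStepNilpotent l Z) (hj : IsJMap l j)
    (hnab : IsKoszulConnection l nabla) (x : E) {z : E} (hz : z ∈ Z) :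
    nabla x z + nabla z x = -j z x := by
  rw [hl.nabla_of_mem_right hj hnab x hz, hl.nabla_of_mem_left hj hnab hz]
  module

end IsTwoStepNilpotent

namespace IsKilling

variable {E : Type*} [NormedAddCommGroup E] [InnerProductSpace ℝ E]
  {l : E →ₗ[ℝ] E →ₗ[ℝ] E} {Z : Submodule ℝ E} {j : E → E →ₗ[ℝ] E} {nabla : E →ₗ[ℝ] E →ₗ[ℝ] E}
  {α : E [⋀^Fin 3]→ₗ[ℝ] ℝ}

open AlternatingMap

theorem map_j_self_of_mem (hk : IsKilling nabla α) (hl : IsTwoStepNilpotent l Z)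
    (hj : IsJMap l j) (hnab : IsKoszulConnection l nabla) (x : E) {z z' : E} (hz : z ∈ Z)
    (hz' : z' ∈ Z) : α ![j z x, z, z'] = 0 := by
  have h := hk z x z'
  rw [hl.nabla_of_mem_of_mem hj hnab hz hz, hl.nabla_of_mem_of_mem hj hnab hz hz',
    hl.nabla_of_mem_left hj hnab hz, map_vec3_zero_left, map_vec3_zero_right,
    map_vec3_smul_mid, map_vec3_swap_left, smul_eq_mul] at h
  linear_combination 2 * h

theorem map_j_swap_of_mem (hk : IsKilling nabla α) (hl : IsTwoStepNilpotent l Z)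
    (hj : IsJMap l j) (hnab : IsKoszulConnection l nabla) (x : E) {z z' z'' : E} (hz : z ∈ Z)
    (hz' : z' ∈ Z) (hz'' : z'' ∈ Z) : α ![j z x, z', z''] = -α ![j z' x, z, z''] := by
  have h := hk.map_j_self_of_mem hl hj hnab x (Z.add_mem hz hz') hz''
  rw [hj.add_left, map_vecCons_add, map_vec3_add_mid, map_vec3_add_mid,
    hk.map_j_self_of_mem hl hj hnab x hz hz'', hk.map_j_self_of_mem hl hj hnab x hz' hz''] at h
  linear_combination h

theorem map_j_of_mem (hk : IsKilling nabla α) (hl : IsTwoStepNilpotent l Z)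
    (hj : IsJMap l j) (hnab : IsKoszulConnection l nabla) (x : E) {z z' z'' : E} (hz : z ∈ Z)
    (hz' : z' ∈ Z) (hz'' : z'' ∈ Z) : α ![j z x, z', z''] = 0 := by
  have h := hk.polarization x z z' z''
  rw [hl.nabla_add_nabla_swap_of_mem hj hnab x hz, hl.nabla_of_mem_of_mem hj hnab hz hz',
    hl.nabla_of_mem_of_mem hj hnab hz hz'', hl.nabla_of_mem_right hj hnab x hz',
    hl.nabla_of_mem_right hj hnab x hz'', map_vec3_neg_left, map_vec3_zero_mid,
    map_vec3_zero_right, map_vec3_smul_mid, map_vec3_smul_right, smul_eq_mul] at h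
  have h₁ : α ![z, j z' x, z''] = α ![j z x, z', z''] := by
    rw [map_vec3_swap_left, hk.map_j_swap_of_mem hl hj hnab x hz' hz hz'', neg_neg]
  have h₂ : α ![z, z', j z'' x] = α ![j z x, z', z''] := by
    rw [map_vec3_swap_right, map_vec3_swap_left, neg_neg,
      hk.map_j_swap_of_mem hl hj hnab x hz'' hz hz', map_vec3_swap_right, neg_neg]
  rw [h₁, h₂] at h
  linear_combination -h / 2

theorem map_j_relation_of_mem_orthogonal (hk : IsKilling nabla α) (hl : IsTwoStepNilpotent l Z)
    (hj : IsJMap l j) (hnab : IsKoszulConnection l nabla)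
    (h₁ : ∀ v ∈ Zᗮ, ∀ z ∈ Z, ∀ z' ∈ Z, α ![v, z, z'] = 0) {z : E} (hz : z ∈ Z) {x x' x'' : E}
    (hx : x ∈ Zᗮ) (hx' : x' ∈ Zᗮ) (hx'' : x'' ∈ Zᗮ) :
    2 * α ![j z x, x', x''] - α ![j z x', x, x''] + α ![j z x'', x, x'] = 0 := by
  have h := hk.polarization x z x' x''
  rw [hl.nabla_add_nabla_swap_of_mem hj hnab x hz, hl.nabla_of_mem_left hj hnab hz,
    hl.nabla_of_mem_left hj hnab hz, hl.nabla_of_mem_orthogonal hnab hx hx',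
    hl.nabla_of_mem_orthogonal hnab hx hx'', map_vec3_neg_left, map_vec3_smul_mid,
    map_vec3_smul_mid, map_vec3_smul_right, map_vec3_smul_right, smul_eq_mul, smul_eq_mul,
    smul_eq_mul, smul_eq_mul] at h
  have e₁ : α ![z, l x x', x''] = 0 := by
    rw [map_vec3_swap_right, map_vec3_swap_left, neg_neg,
      h₁ x'' hx'' z hz _ (hl.apply_mem x x')]
  have e₂ : α ![z, x', l x x''] = 0 := by
    rw [map_vec3_swap_left, h₁ x' hx' z hz _ (hl.apply_mem x x''), neg_zero]
  have e₃ : α ![x, x', j z x''] = α ![j z x'', x, x'] := by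
    rw [map_vec3_swap_right α x (j z x'') x', map_vec3_swap_left, neg_neg]
  rw [e₁, e₂, e₃, map_vec3_swap_left α (j z x') x x''] at h
  linear_combination -2 * h

theorem map_j_of_mem_orthogonal (hk : IsKilling nabla α) (hl : IsTwoStepNilpotent l Z)
    (hj : IsJMap l j) (hnab : IsKoszulConnection l nabla)
    (h₁ : ∀ v ∈ Zᗮ, ∀ z ∈ Z, ∀ z' ∈ Z, α ![v, z, z'] = 0) {z : E} (hz : z ∈ Z) {x x' x'' : E}
    (hx : x ∈ Zᗮ) (hx' : x' ∈ Zᗮ) (hx'' : x'' ∈ Zᗮ) : α ![j z x, x', x''] = 0 := by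
  have c₁ := hk.map_j_relation_of_mem_orthogonal hl hj hnab h₁ hz hx hx' hx''
  have c₂ := hk.map_j_relation_of_mem_orthogonal hl hj hnab h₁ hz hx' hx hx''
  have c₃ := hk.map_j_relation_of_mem_orthogonal hl hj hnab h₁ hz hx'' hx hx'
  rw [map_vec3_swap_right α (j z x'') x x'] at c₂
  rw [map_vec3_swap_right α (j z x) x' x'', map_vec3_swap_right α (j z x') x x''] at c₃
  linarith

end IsKilling

theorem killing_stmt12_general {n : Type*} [NormedAddCommGroup n] [InnerProductSpace ℝ n]
    [FiniteDimensional ℝ n]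
    (l : n →ₗ[ℝ] n →ₗ[ℝ] n) (hanti : ∀ x : n, l x x = 0)
    (Z : Submodule ℝ n) (hZ : ∀ x : n, x ∈ Z ↔ ∀ y : n, l x y = 0)
    (h2 : ∀ x y : n, l x y ∈ Z)
    (j : n → n →ₗ[ℝ] n) (hj : ∀ z x y : n, ⟪j z x, y⟫ = ⟪z, l x y⟫)
    -- the Levi-Civita connection, via the Koszul formula
    (nabla : n →ₗ[ℝ] n →ₗ[ℝ] n)
    (hnab : ∀ x y w : n, 2 * ⟪nabla x y, w⟫ = ⟪l x y, w⟫ + ⟪l w x, y⟫ + ⟪l w y, x⟫)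
    -- a 3-form α, assumed Killing: y ⌟ ∇_y α = 0
    (α : AlternatingMap ℝ n ℝ (Fin 3))
    (hkill : ∀ y a b : n,
      α ![nabla y y, a, b] + α ![y, nabla y a, b] + α ![y, a, nabla y b] = 0) :
    (∀ x ∈ Zᗮ, ∀ y ∈ Zᗮ, ∀ w ∈ Zᗮ, α ![x, y, w] = 0) ∧
    (∀ x ∈ Zᗮ, ∀ z ∈ Z, ∀ z' ∈ Z, α ![x, z, z'] = 0) := by
  have hl : IsTwoStepNilpotent l Z := ⟨hanti, hZ, h2⟩
  have hk : IsKilling nabla α := hkill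
  have hspan := hl.orthogonal_le_span_j hj
  have hα₁ : ∀ x ∈ Zᗮ, ∀ z ∈ Z, ∀ z' ∈ Z, α ![x, z, z'] = 0 := fun x hx z hz z' hz' =>
    α.map_vec3_eq_zero_of_mem_span z z'
      (by rintro _ ⟨w, hw, y, -, rfl⟩; exact hk.map_j_of_mem hl hj hnab y hw hz hz') (hspan hx)
  refine ⟨fun x hx y hy w hw => ?_, hα₁⟩
  exact α.map_vec3_eq_zero_of_mem_span y w
    (by rintro _ ⟨z, hz, v, hv, rfl⟩; exact hk.map_j_of_mem_orthogonal hl hj hnab hα₁ hz hv hy hw)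
    (hspan hx)

/-- If `α` is a Killing 3-form on a 2-step nilpotent metric Lie algebra
(`y ⌟ ∇_y α = 0` for all `y`), then its components `α₃ ∈ Λ³v*` and `α₁ ∈ v* ⊗ Λ²z*` vanish,
i.e. `α` vanishes whenever all three arguments are in `v` and whenever one argument is in `v`
and two are in `z`. -/
theorem killing_stmt12 {n : Type*} [NormedAddCommGroup n] [InnerProductSpace ℝ n]
    [FiniteDimensional ℝ n]
    (l : n →ₗ[ℝ] n →ₗ[ℝ] n) (hanti : ∀ x : n, l x x = 0)
    (Z : Submodule ℝ n) (hZ : ∀ x : n, x ∈ Z ↔ ∀ y : n, l x y = 0)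
    (h2 : ∀ x y : n, l x y ∈ Z) (hna : ∃ x : n, ∃ y : n, l x y ≠ 0)
    (j : n → n →ₗ[ℝ] n) (hj : ∀ z x y : n, ⟪j z x, y⟫ = ⟪z, l x y⟫)
    -- the Levi-Civita connection, via the Koszul formula
    (nabla : n →ₗ[ℝ] n →ₗ[ℝ] n)
    (hnab : ∀ x y w : n, 2 * ⟪nabla x y, w⟫ = ⟪l x y, w⟫ + ⟪l w x, y⟫ + ⟪l w y, x⟫)
    -- a 3-form α, assumed Killing: y ⌟ ∇_y α = 0
    (α : AlternatingMap ℝ n ℝ (Fin 3))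
    (hkill : ∀ y a b : n,
      α ![nabla y y, a, b] + α ![y, nabla y a, b] + α ![y, a, nabla y b] = 0) :
    (∀ x ∈ Zᗮ, ∀ y ∈ Zᗮ, ∀ w ∈ Zᗮ, α ![x, y, w] = 0) ∧
    (∀ x ∈ Zᗮ, ∀ z ∈ Z, ∀ z' ∈ Z, α ![x, z, z'] = 0) :=
  killing_stmt12_general l hanti Z hZ h2 j hj nabla hnab α hkill
end

section
/- Let v be a Euclidean space and A₁,…,A_m, D₁,…,D_m skew-symmetric endomorphisms of v with A₁,…,A_m linearly independent. If Σ_t A_t x ∧ D_t x = 0 for all x ∈ v, then each D_t is a linear combination of A₁,…,A_m. Moreover, with G the Gram matrix G_{ts} = ⟨A_s, A_t⟩ and C_{ts} = ⟨A_s, D_t⟩, one has Σ_t G_{ts} D_t = Σ_t C_{ts} A_t for each s. -/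
open scoped RealInnerProductSpace

/-!
Polarizing `∑ₜ Aₜ x ∧ Dₜ x = 0` and contracting against an endomorphism `S` over an orthonormal
basis gives `E + F = 0` with `E = ∑ₜ (⟨S, Aₜ⟩ Dₜ - ⟨S, Dₜ⟩ Aₜ)`, where `⟨S, T⟩ = trace (S† T)`, and
`F = ∑ₜ (Dₜ S† Aₜ - Aₜ S† Dₜ)`. Since all `Aₜ, Dₜ, S` are skew-adjoint, `E` is skew-adjoint while
`F` is self-adjoint, so `E = 0`; taking `S = A_s` is the second claim. The trace form is an inner
product, so the Gram matrix `G` of the independent `Aₜ` is invertible, and applying `G⁻¹` to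
`∑ₜ G_{st} Dₜ ∈ span A` puts every `Dₜ` in `span A`.
-/

theorem eq_zero_of_mem_skewAdjoint_of_isSelfAdjoint {R : Type*} [AddCommGroup R]
    [StarAddMonoid R] [IsAddTorsionFree R] {x : R} (hskew : x ∈ skewAdjoint R)
    (hself : IsSelfAdjoint x) : x = 0 :=
  self_eq_neg.mp (hself.symm.trans (skewAdjoint.mem_iff.mp hskew))

theorem Submodule.mem_of_isUnit_of_forall_sum_smul_mem {R M ι : Type*} [CommRing R]
    [AddCommGroup M] [Module R M] [Fintype ι] [DecidableEq ι] {p : Submodule R M}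
    {G : Matrix ι ι R} (hG : IsUnit G) {v : ι → M} (hv : ∀ s, ∑ t, G s t • v t ∈ p) (t : ι) :
    v t ∈ p := by
  obtain ⟨H, hHG⟩ := hG.exists_left_inv
  have hvt : v t = ∑ s, H t s • ∑ u, G s u • v u :=
    calc v t = ∑ u, (H * G) t u • v u := by simp [hHG, Matrix.one_apply]
      _ = ∑ s, H t s • ∑ u, G s u • v u := by
        simp only [Matrix.mul_apply, Finset.sum_smul, Finset.smul_sum, smul_smul]
        exact Finset.sum_comm
  rw [hvt]
  exact p.sum_mem fun s _ => p.smul_mem _ (hv s)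

theorem LinearMap.mem_skewAdjoint_iff_inner {𝕜 E : Type*} [RCLike 𝕜] [NormedAddCommGroup E]
    [InnerProductSpace 𝕜 E] [FiniteDimensional 𝕜 E] {T : E →ₗ[𝕜] E} :
    T ∈ skewAdjoint (E →ₗ[𝕜] E) ↔ ∀ x y, inner 𝕜 (T x) y = -inner 𝕜 x (T y) := by
  rw [skewAdjoint.mem_iff, star_eq_adjoint, eq_comm, eq_adjoint_iff]
  simp [neg_eq_iff_eq_neg]

section Real

open LinearMap

variable {V ι κ : Type*} [NormedAddCommGroup V] [InnerProductSpace ℝ V] [Fintype ι] [Fintype κ]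

theorem LinearMap.trace_adjoint_comp_eq_sum_inner [FiniteDimensional ℝ V]
    (b : OrthonormalBasis ι ℝ V) (S T : V →ₗ[ℝ] V) :
    trace ℝ V (adjoint S ∘ₗ T) = ∑ i, ⟪S (b i), T (b i)⟫ := by
  simp [trace_eq_sum_inner _ b, adjoint_inner_right]

theorem OrthonormalBasis.sum_inner_mul_inner_apply [FiniteDimensional ℝ V]
    (b : OrthonormalBasis ι ℝ V) (S T : V →ₗ[ℝ] V) (u w : V) :
    ∑ i, ⟪u, S (b i)⟫ * ⟪T (b i), w⟫ = ⟪T (adjoint S u), w⟫ :=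
  calc ∑ i, ⟪u, S (b i)⟫ * ⟪T (b i), w⟫
      = ∑ i, ⟪adjoint S u, b i⟫ * ⟪b i, adjoint T w⟫ := by
        simp only [adjoint_inner_left, adjoint_inner_right]
    _ = ⟪T (adjoint S u), w⟫ := by rw [b.sum_inner_mul_inner, adjoint_inner_right]

theorem sum_wedge_polarization (A D : κ → V →ₗ[ℝ] V)
    (hwedge : ∀ x a c : V,
      ∑ t, (⟪A t x, a⟫ * ⟪D t x, c⟫ - ⟪A t x, c⟫ * ⟪D t x, a⟫) = 0)
    (x y a c : V) :
    ∑ t, (⟪A t x, a⟫ * ⟪D t y, c⟫ - ⟪A t x, c⟫ * ⟪D t y, a⟫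
      + ⟪A t y, a⟫ * ⟪D t x, c⟫ - ⟪D t x, a⟫ * ⟪A t y, c⟫) = 0 :=
  calc _ = ∑ t, ((⟪A t (x + y), a⟫ * ⟪D t (x + y), c⟫ - ⟪A t (x + y), c⟫ * ⟪D t (x + y), a⟫)
        - (⟪A t x, a⟫ * ⟪D t x, c⟫ - ⟪A t x, c⟫ * ⟪D t x, a⟫)
        - (⟪A t y, a⟫ * ⟪D t y, c⟫ - ⟪A t y, c⟫ * ⟪D t y, a⟫)) := by
        refine Finset.sum_congr rfl fun t _ => ?_
        simp only [map_add, inner_add_left]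
        ring
    _ = 0 := by simp only [Finset.sum_sub_distrib, hwedge, sub_zero]

/-- The polarized identity at `y = b i`, `a = S (b i)`, summed over an orthonormal basis `b`. -/
theorem sum_trace_smul_sub_add_sum_comp_sub_eq_zero [FiniteDimensional ℝ V]
    (A D : κ → V →ₗ[ℝ] V)
    (hwedge : ∀ x a c : V,
      ∑ t, (⟪A t x, a⟫ * ⟪D t x, c⟫ - ⟪A t x, c⟫ * ⟪D t x, a⟫) = 0)
    (S : V →ₗ[ℝ] V) :
    ∑ t, (trace ℝ V (adjoint S ∘ₗ A t) • D t - trace ℝ V (adjoint S ∘ₗ D t) • A t)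
      + ∑ t, (D t ∘ₗ adjoint S ∘ₗ A t - A t ∘ₗ adjoint S ∘ₗ D t) = 0 := by
  let b := stdOrthonormalBasis ℝ V
  ext x
  refine ext_inner_right ℝ fun c => ?_
  have hcontract : ∀ t, ∑ i, (⟪A t x, S (b i)⟫ * ⟪D t (b i), c⟫
      - ⟪A t x, c⟫ * ⟪D t (b i), S (b i)⟫ + ⟪A t (b i), S (b i)⟫ * ⟪D t x, c⟫
      - ⟪D t x, S (b i)⟫ * ⟪A t (b i), c⟫) =
      trace ℝ V (adjoint S ∘ₗ A t) * ⟪D t x, c⟫ - trace ℝ V (adjoint S ∘ₗ D t) * ⟪A t x, c⟫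
        + (⟪D t (adjoint S (A t x)), c⟫ - ⟪A t (adjoint S (D t x)), c⟫) := by
    intro t
    simp only [Finset.sum_sub_distrib, Finset.sum_add_distrib, ← Finset.mul_sum, ← Finset.sum_mul,
      b.sum_inner_mul_inner_apply]
    simp only [trace_adjoint_comp_eq_sum_inner b, real_inner_comm (S _)]
    ring
  rw [LinearMap.zero_apply, inner_zero_left]
  refine .trans ?_ (Finset.sum_eq_zero (s := Finset.univ) fun i _ =>
    sum_wedge_polarization A D hwedge x (b i) (S (b i)) c)
  rw [Finset.sum_comm]
  simp only [hcontract, LinearMap.add_apply, LinearMap.sum_apply, LinearMap.sub_apply,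
    LinearMap.smul_apply, LinearMap.comp_apply, inner_add_left, inner_sub_left, sum_inner, real_inner_smul_left, Finset.sum_add_distrib, Finset.sum_sub_distrib]

theorem sum_trace_smul_eq_sum_trace_smul [FiniteDimensional ℝ V] {A D : κ → V →ₗ[ℝ] V}
    (hA : ∀ t, A t ∈ skewAdjoint (V →ₗ[ℝ] V)) (hD : ∀ t, D t ∈ skewAdjoint (V →ₗ[ℝ] V))
    (hwedge : ∀ x a c : V,
      ∑ t, (⟪A t x, a⟫ * ⟪D t x, c⟫ - ⟪A t x, c⟫ * ⟪D t x, a⟫) = 0)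
    {S : V →ₗ[ℝ] V} (hS : S ∈ skewAdjoint (V →ₗ[ℝ] V)) :
    ∑ t, trace ℝ V (adjoint S ∘ₗ A t) • D t = ∑ t, trace ℝ V (adjoint S ∘ₗ D t) • A t := by
  have := IsAddTorsionFree.of_isTorsionFree ℝ (V →ₗ[ℝ] V)
  set E := ∑ t, (trace ℝ V (adjoint S ∘ₗ A t) • D t - trace ℝ V (adjoint S ∘ₗ D t) • A t)
  set F := ∑ t, (D t ∘ₗ adjoint S ∘ₗ A t - A t ∘ₗ adjoint S ∘ₗ D t)
  have hE : E ∈ skewAdjoint (V →ₗ[ℝ] V) :=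
    sum_mem fun t _ => sub_mem (skewAdjoint.smul_mem _ (hD t)) (skewAdjoint.smul_mem _ (hA t))
  have hF : IsSelfAdjoint F := by
    refine isSelfAdjoint_sum _ fun t _ => ?_
    have hstar : star (D t * star S * A t) = -(A t * star S * D t) := by
      rw [star_mul, star_mul, star_star, skewAdjoint.mem_iff.mp (hA t),
        skewAdjoint.mem_iff.mp (hD t), skewAdjoint.mem_iff.mp hS]
      noncomm_ring
    convert IsSelfAdjoint.add_star_self (D t * star S * A t) using 1
    rw [hstar, ← sub_eq_add_neg]
    rfl
  have hEF : E = -F :=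
    eq_neg_of_add_eq_zero_left (sum_trace_smul_sub_add_sum_comp_sub_eq_zero A D hwedge S)
  have hE0 : E = 0 := eq_zero_of_mem_skewAdjoint_of_isSelfAdjoint hE (by rw [hEF]; exact hF.neg)
  rw [← sub_eq_zero, ← Finset.sum_sub_distrib]
  exact hE0

/-- Pulls the inner product of `PiLp 2` back to the trace form `trace (S† ∘ T)`, so that
Gram-matrix results apply to endomorphisms. -/
noncomputable def OrthonormalBasis.evalPiLp (b : OrthonormalBasis ι ℝ V) :
    (V →ₗ[ℝ] V) →ₗ[ℝ] PiLp 2 (fun _ : ι => V) :=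
  (WithLp.linearEquiv 2 ℝ (ι → V)).symm.toLinearMap ∘ₗ LinearMap.pi fun i => applyₗ (b i)

theorem OrthonormalBasis.inner_evalPiLp [FiniteDimensional ℝ V] (b : OrthonormalBasis ι ℝ V)
    (S T : V →ₗ[ℝ] V) :
    ⟪b.evalPiLp S, b.evalPiLp T⟫ = trace ℝ V (adjoint S ∘ₗ T) := by
  simp [OrthonormalBasis.evalPiLp, PiLp.inner_apply, trace_adjoint_comp_eq_sum_inner b]

theorem OrthonormalBasis.ker_evalPiLp (b : OrthonormalBasis ι ℝ V) : ker b.evalPiLp = ⊥ := by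
  refine ker_eq_bot'.mpr fun T hT => b.toBasis.ext fun i => ?_
  simpa [OrthonormalBasis.evalPiLp] using congr(($hT).ofLp i)

theorem isUnit_matrix_trace_adjoint_comp_of_linearIndependent [FiniteDimensional ℝ V]
    [DecidableEq κ] {A : κ → V →ₗ[ℝ] V} (hA : LinearIndependent ℝ A) :
    IsUnit (Matrix.of fun s t => trace ℝ V (adjoint (A s) ∘ₗ A t)) := by
  let b := stdOrthonormalBasis ℝ V
  have hgram : Matrix.of (fun s t => trace ℝ V (adjoint (A s) ∘ₗ A t)) =
      Matrix.gram ℝ (b.evalPiLp ∘ A) := by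
    ext s t
    simp [Matrix.gram, b.inner_evalPiLp]
  rw [hgram]
  exact (Matrix.posDef_gram_of_linearIndependent (hA.map' _ b.ker_evalPiLp)).isUnit

end Real

/-- Let `v` be a Euclidean space and `A₁,…,A_m, D₁,…,D_m` skew-symmetric
endomorphisms with `A₁,…,A_m` linearly independent.  If `Σ_t A_t x ∧ D_t x = 0` for all
`x ∈ v`, then each `D_t` is a linear combination of the `A_t`; moreover, with
`G_{ts} = ⟨A_s, A_t⟩` and `C_{ts} = ⟨A_s, D_t⟩` (trace inner products), one has
`Σ_t G_{ts} D_t = Σ_t C_{ts} A_t` for each `s`. -/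
theorem killing_stmt14 {V : Type*} [NormedAddCommGroup V] [InnerProductSpace ℝ V]
    [FiniteDimensional ℝ V]
    (m : ℕ) (A D : Fin m → (V →ₗ[ℝ] V))
    (hAskew : ∀ t : Fin m, ∀ a b : V, ⟪A t a, b⟫ = -⟪a, A t b⟫)
    (hDskew : ∀ t : Fin m, ∀ a b : V, ⟪D t a, b⟫ = -⟪a, D t b⟫)
    (hAind : LinearIndependent ℝ A)
    -- Σ_t A_t x ∧ D_t x = 0 as a 2-form
    (hwedge : ∀ x a b : V,
      ∑ t : Fin m, (⟪A t x, a⟫ * ⟪D t x, b⟫ - ⟪A t x, b⟫ * ⟪D t x, a⟫) = 0) :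
    (∀ t : Fin m, D t ∈ Submodule.span ℝ (Set.range A)) ∧
    (∀ s : Fin m,
      ∑ t : Fin m, (LinearMap.trace ℝ V ((LinearMap.adjoint (A s)) ∘ₗ (A t))) • D t =
      ∑ t : Fin m, (LinearMap.trace ℝ V ((LinearMap.adjoint (A s)) ∘ₗ (D t))) • A t) := by
  have hA t := LinearMap.mem_skewAdjoint_iff_inner.mpr (hAskew t)
  have hD t := LinearMap.mem_skewAdjoint_iff_inner.mpr (hDskew t)
  have hidentity s := sum_trace_smul_eq_sum_trace_smul hA hD hwedge (hA s)
  refine ⟨Submodule.mem_of_isUnit_of_forall_sum_smul_mem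
    (isUnit_matrix_trace_adjoint_comp_of_linearIndependent hAind) fun s => ?_, hidentity⟩
  simp only [Matrix.of_apply, hidentity s]
  exact Submodule.sum_mem _ fun t _ => Submodule.smul_mem _ _ (Submodule.subset_span ⟨t, rfl⟩)
end

section
/- In the setting of the previous lemma (B symmetric on z with [j(z),j(Bz)] = 0 and j(Bz)j(z') − j(Bz')j(z) skew for all z,z'), if z and z' are eigenvectors of B with distinct eigenvalues λ ≠ μ, then j(z)j(z') = 0. -/
/-! Evaluating `[j z, j (B z)] = 0` at `z + z'` shows that `j z` and `j z'` commute (here `λ ≠ μ`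
is used), so their product `P` is symmetric, both factors being skew. The skew operator
`j (B z) j z' − j (B z') j z` then equals `(λ − μ) P`; an operator that is both symmetric and skew
vanishes. -/

open scoped RealInnerProductSpace InnerProductSpace

theorem commute_of_commute_add_smul_add {K A : Type*} [Field K] [Ring A] [Algebra K A]
    {a b : A} {lam mu : K} (hne : lam ≠ mu) (h : Commute (a + b) (lam • a + mu • b)) :
    Commute a b := by
  have key : (mu - lam) • (a * b - b * a) = 0 := by
    have := h.eq
    simp only [add_mul, mul_add, mul_smul_comm, smul_mul_assoc] at this
    linear_combination (norm := module) this
  exact sub_eq_zero.mp ((smul_eq_zero.mp key).resolve_left (sub_ne_zero.mpr hne.symm))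

namespace LinearMap

variable {𝕜 E : Type*} [RCLike 𝕜] [NormedAddCommGroup E] [InnerProductSpace 𝕜 E]

def IsSkewSymmetric (T : E →ₗ[𝕜] E) : Prop :=
  ∀ x y, ⟪T x, y⟫_𝕜 = -⟪x, T y⟫_𝕜

theorem IsSkewSymmetric.isSymmetric_mul_of_commute {S T : E →ₗ[𝕜] E} (hS : S.IsSkewSymmetric)
    (hT : T.IsSkewSymmetric) (hST : Commute S T) : (S * T).IsSymmetric := fun x y => by
  rw [Module.End.mul_apply, hS, hT, neg_neg, ← Module.End.mul_apply, hST.eq, Module.End.mul_apply]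

theorem IsSkewSymmetric.eq_zero_of_isSymmetric {T : E →ₗ[𝕜] E} (hskew : T.IsSkewSymmetric)
    (hsym : T.IsSymmetric) : T = 0 := by
  ext x
  have h := hskew x (T x)
  rw [← hsym x (T x)] at h
  exact (inner_self_eq_zero (𝕜 := 𝕜)).mp (CharZero.eq_neg_self_iff.mp h)

end LinearMap

section

variable {E : Type*} [NormedAddCommGroup E] [InnerProductSpace ℝ E]
  {l : E →ₗ[ℝ] E →ₗ[ℝ] E} {j : E → E →ₗ[ℝ] E}

theorem map_add_of_inner_eq (hj : ∀ z x y, ⟪j z x, y⟫ = ⟪z, l x y⟫) (u v : E) :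
    j (u + v) = j u + j v := by
  ext x
  refine ext_inner_right ℝ fun y => ?_
  simp only [LinearMap.add_apply, inner_add_left, hj]

theorem map_smul_of_inner_eq (hj : ∀ z x y, ⟪j z x, y⟫ = ⟪z, l x y⟫) (c : ℝ) (u : E) :
    j (c • u) = c • j u := by
  ext x
  refine ext_inner_right ℝ fun y => ?_
  simp only [LinearMap.smul_apply, real_inner_smul_left, hj]

theorem isSkewSymmetric_of_inner_eq (hl : l.IsAlt)
    (hj : ∀ z x y, ⟪j z x, y⟫ = ⟪z, l x y⟫) (u : E) : (j u).IsSkewSymmetric := fun x y => by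
  rw [hj, real_inner_comm (j u y), hj, ← inner_neg_right, hl.neg]

end

theorem killing_stmt16_general {n : Type*} [NormedAddCommGroup n] [InnerProductSpace ℝ n]
    (l : n →ₗ[ℝ] n →ₗ[ℝ] n) (hanti : ∀ x : n, l x x = 0)
    (Z : Submodule ℝ n)
    (j : n → n →ₗ[ℝ] n) (hj : ∀ z x y : n, ⟪j z x, y⟫ = ⟪z, l x y⟫)
    (B : n →ₗ[ℝ] n)
    (hBcomm : ∀ z ∈ Z, (j z) ∘ₗ (j (B z)) = (j (B z)) ∘ₗ (j z))
    (hBskw : ∀ z ∈ Z, ∀ z' ∈ Z, ∀ a b : n,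
      ⟪((j (B z)) ∘ₗ (j z') - (j (B z')) ∘ₗ (j z)) a, b⟫ =
        -⟪a, ((j (B z)) ∘ₗ (j z') - (j (B z')) ∘ₗ (j z)) b⟫)
    -- z, z' eigenvectors of B with distinct eigenvalues
    (z z' : n) (hz : z ∈ Z) (hz' : z' ∈ Z) (lam mu : ℝ)
    (hev : B z = lam • z) (hev' : B z' = mu • z') (hne : lam ≠ mu) :
    (j z) ∘ₗ (j z') = 0 := by
  have jadd := map_add_of_inner_eq hj
  have jsmul := map_smul_of_inner_eq hj
  have hcomm : Commute (j z) (j z') := by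
    refine commute_of_commute_add_smul_add hne ?_
    have := hBcomm (z + z') (Z.add_mem hz hz')
    rwa [map_add, hev, hev', jadd, jadd, jsmul, jsmul] at this
  have hskew : ((lam - mu) • (j z * j z')).IsSkewSymmetric := by
    have := hBskw z hz z' hz'
    rwa [hev, hev', jsmul, jsmul, LinearMap.smul_comp, LinearMap.smul_comp,
      ← Module.End.mul_eq_comp, ← Module.End.mul_eq_comp, ← hcomm.eq, ← sub_smul] at this
  have hsym : ((lam - mu) • (j z * j z')).IsSymmetric :=
    ((isSkewSymmetric_of_inner_eq hanti hj z).isSymmetric_mul_of_commute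
      (isSkewSymmetric_of_inner_eq hanti hj z') hcomm).smul (conj_trivial _)
  exact (smul_eq_zero.mp (hskew.eq_zero_of_isSymmetric hsym)).resolve_left (sub_ne_zero.mpr hne)

/-- In the setting of the previous lemma (`B` symmetric on `z`, with
`[j(z), j(Bz)] = 0` and `j(Bz) j(z') − j(Bz') j(z)` skew for all `z, z'`), if `z` and `z'`
are eigenvectors of `B` with distinct eigenvalues `λ ≠ μ`, then `j(z) j(z') = 0`. -/
theorem killing_stmt16 {n : Type*} [NormedAddCommGroup n] [InnerProductSpace ℝ n]
    [FiniteDimensional ℝ n]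
    (l : n →ₗ[ℝ] n →ₗ[ℝ] n) (hanti : ∀ x : n, l x x = 0)
    (Z : Submodule ℝ n) (hZ : ∀ x : n, x ∈ Z ↔ ∀ y : n, l x y = 0)
    (h2 : ∀ x y : n, l x y ∈ Z) (hna : ∃ x : n, ∃ y : n, l x y ≠ 0)
    (j : n → n →ₗ[ℝ] n) (hj : ∀ z x y : n, ⟪j z x, y⟫ = ⟪z, l x y⟫)
    (hjinj : ∀ z ∈ Z, j z = 0 → z = 0)
    (B : n →ₗ[ℝ] n) (hBZ : ∀ z ∈ Z, B z ∈ Z)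
    (hBsym : ∀ z ∈ Z, ∀ z' ∈ Z, ⟪B z, z'⟫ = ⟪z, B z'⟫)
    (hBcomm : ∀ z ∈ Z, (j z) ∘ₗ (j (B z)) = (j (B z)) ∘ₗ (j z))
    (hBskw : ∀ z ∈ Z, ∀ z' ∈ Z, ∀ a b : n,
      ⟪((j (B z)) ∘ₗ (j z') - (j (B z')) ∘ₗ (j z)) a, b⟫ =
        -⟪a, ((j (B z)) ∘ₗ (j z') - (j (B z')) ∘ₗ (j z)) b⟫)
    -- z, z' eigenvectors of B with distinct eigenvalues
    (z z' : n) (hz : z ∈ Z) (hz' : z' ∈ Z) (lam mu : ℝ)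
    (hev : B z = lam • z) (hev' : B z' = mu • z') (hne : lam ≠ mu) :
    (j z) ∘ₗ (j z') = 0 :=
  killing_stmt16_general l hanti Z j hj B hBcomm hBskw z z' hz hz' lam mu hev hev' hne
end
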